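/- arXiv:2212.07235 — 6 statements merged into one kernel-verified Lean document; each statement's English description precedes it below -/
import Mathlib

section
/- Let l₀,…,l₄ be ℂ-linearly independent linear forms in R and let M be the 6×6 skew-symmetric matrix over R with rows (0, 0, 0, 0, l₀, l₁), (0, 0, 0, −l₀, 0, l₂), (0, 0, 0, −l₁, −l₂, 0), (0, l₀, l₁, 0, l₃, l₄), (−l₀, 0, l₂, −l₃, 0, 0), (−l₁, −l₂, 0, −l₄, 0, 0) (type (d)). Then Pf(M) = 0; for every 6×6 skew-symmetric matrix M′ all of whose entries are linear forms there is a unique cubic Φ(M′) ∈ R such that Pf(M + εM′) = ε·Φ(M′) in R[ε]/(ε²); the assignment M′ ↦ Φ(M′) is ℂ-linear from the ℂ-vector space of 6×6 skew-symmetric matrices of linear forms to the ℂ-vector space of cubics; and the ℂ-dimension of the range of Φ equals 27. -/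
open MvPolynomial Matrix

noncomputable section

/-- The polynomial ring `R = ℂ[x₀,…,x₄]`. -/
abbrev Rp : Type := MvPolynomial (Fin 5) ℂ

/-- The sub-Pfaffian `q_{αβ}(N)` of a `6 × 6` matrix: for `α < β` it is
`N_{ij}N_{kl} − N_{ik}N_{jl} + N_{il}N_{jk}` where `i < j < k < l` are the elements of
`{0,…,5} ∖ {α,β}`. -/
def subPf {A : Type*} [CommRing A] (N : Matrix (Fin 6) (Fin 6) A) (α β : Fin 6) : A :=
  match (List.finRange 6).filter (fun i => decide (i ≠ α) && decide (i ≠ β)) with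
  | [i, j, k, m] => N i j * N k m - N i k * N j m + N i m * N j k
  | _ => 0

/-- The Pfaffian of a `6 × 6` skew-symmetric matrix. -/
def pf {A : Type*} [CommRing A] (N : Matrix (Fin 6) (Fin 6) A) : A :=
  N 0 1 * subPf N 0 1 - N 0 2 * subPf N 0 2 + N 0 3 * subPf N 0 3
    - N 0 4 * subPf N 0 4 + N 0 5 * subPf N 0 5

/-- The matrix `M + ε M'` over `R[ε]/(ε²)`, realised via dual numbers. -/
def jet1 (M M' : Matrix (Fin 6) (Fin 6) Rp) : Matrix (Fin 6) (Fin 6) (DualNumber Rp) :=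
  Matrix.of fun i j =>
    TrivSqZeroExt.inl (M i j) + DualNumber.eps * TrivSqZeroExt.inl (M' i j)

/-- The `ℂ`-vector space of `6 × 6` skew-symmetric matrices all of whose entries are
linear forms. -/
def SkewLin : Submodule ℂ (Matrix (Fin 6) (Fin 6) Rp) where
  carrier := {N | Nᵀ = -N ∧ ∀ i j, (N i j).IsHomogeneous 1}
  add_mem' := by
    rintro a b ⟨ha1, ha2⟩ ⟨hb1, hb2⟩
    exact ⟨by rw [Matrix.transpose_add, ha1, hb1, neg_add],
      fun i j => (ha2 i j).add (hb2 i j)⟩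
  zero_mem' := ⟨by simp, fun i j => by
    simpa using MvPolynomial.isHomogeneous_zero (Fin 5) ℂ 1⟩
  smul_mem' := by
    rintro c a ⟨ha1, ha2⟩
    refine ⟨by rw [Matrix.transpose_smul, ha1, smul_neg], fun i j => ?_⟩
    have h : (c • a) i j = MvPolynomial.C c * a i j := by
      simp [Matrix.smul_apply, MvPolynomial.smul_eq_C_mul]
    rw [h]
    exact (ha2 i j).C_mul c

/-- The `ℂ`-vector space of cubic forms in `R`. -/
abbrev Cubics : Submodule ℂ Rp := homogeneousSubmodule (Fin 5) ℂ 3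



namespace Tsd

-- vector evaluation lemmas
lemma vec6_0 {α : Type*} (a b c d e f : α) : ![a,b,c,d,e,f] 0 = a := rfl
lemma vec6_1 {α : Type*} (a b c d e f : α) : ![a,b,c,d,e,f] 1 = b := rfl
lemma vec6_2 {α : Type*} (a b c d e f : α) : ![a,b,c,d,e,f] 2 = c := rfl
lemma vec6_3 {α : Type*} (a b c d e f : α) : ![a,b,c,d,e,f] 3 = d := rfl
lemma vec6_4 {α : Type*} (a b c d e f : α) : ![a,b,c,d,e,f] 4 = e := rfl
lemma vec6_5 {α : Type*} (a b c d e f : α) : ![a,b,c,d,e,f] 5 = f := rfl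
lemma vec5_0 {α : Type*} (a b c d e : α) : ![a,b,c,d,e] 0 = a := rfl
lemma vec5_1 {α : Type*} (a b c d e : α) : ![a,b,c,d,e] 1 = b := rfl
lemma vec5_2 {α : Type*} (a b c d e : α) : ![a,b,c,d,e] 2 = c := rfl
lemma vec5_3 {α : Type*} (a b c d e : α) : ![a,b,c,d,e] 3 = d := rfl
lemma vec5_4 {α : Type*} (a b c d e : α) : ![a,b,c,d,e] 4 = e := rfl

lemma subPf_01 {A : Type*} [CommRing A] (N : Matrix (Fin 6) (Fin 6) A) :
    subPf N 0 1 = N 2 3 * N 4 5 - N 2 4 * N 3 5 + N 2 5 * N 3 4 := rfl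
lemma subPf_02 {A : Type*} [CommRing A] (N : Matrix (Fin 6) (Fin 6) A) :
    subPf N 0 2 = N 1 3 * N 4 5 - N 1 4 * N 3 5 + N 1 5 * N 3 4 := rfl
lemma subPf_03 {A : Type*} [CommRing A] (N : Matrix (Fin 6) (Fin 6) A) :
    subPf N 0 3 = N 1 2 * N 4 5 - N 1 4 * N 2 5 + N 1 5 * N 2 4 := rfl
lemma subPf_04 {A : Type*} [CommRing A] (N : Matrix (Fin 6) (Fin 6) A) :
    subPf N 0 4 = N 1 2 * N 3 5 - N 1 3 * N 2 5 + N 1 5 * N 2 3 := rfl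
lemma subPf_05 {A : Type*} [CommRing A] (N : Matrix (Fin 6) (Fin 6) A) :
    subPf N 0 5 = N 1 2 * N 3 4 - N 1 3 * N 2 4 + N 1 4 * N 2 3 := rfl

/-- The type (d) matrix. -/
def Md (l : Fin 5 → Rp) : Matrix (Fin 6) (Fin 6) Rp :=
  !![0, 0, 0, 0, l 0, l 1;
     0, 0, 0, -l 0, 0, l 2;
     0, 0, 0, -l 1, -l 2, 0;
     0, l 0, l 1, 0, l 3, l 4;
     -l 0, 0, l 2, -l 3, 0, 0;
     -l 1, -l 2, 0, -l 4, 0, 0]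

lemma pf_Md (l : Fin 5 → Rp) : pf (Md l) = 0 := by
  simp only [pf, subPf_01, subPf_02, subPf_03, subPf_04, subPf_05, Md, Matrix.of_apply,
    vec6_0, vec6_1, vec6_2, vec6_3, vec6_4, vec6_5]
  ring

/-- The first-order term of the Pfaffian of `Md l + ε N`, for skew `N`. -/
def Phi0 (l : Fin 5 → Rp) (N : Matrix (Fin 6) (Fin 6) Rp) : Rp :=
  l 2 * l 4 * N 0 1 - l 2 * l 3 * N 0 2 - l 2 * l 2 * N 0 3 + l 1 * l 2 * N 0 4
  - l 0 * l 2 * N 0 5 + (l 1 * l 3 - l 0 * l 4) * N 1 2 + l 1 * l 2 * N 1 3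
  - l 1 * l 1 * N 1 4 + l 0 * l 1 * N 1 5 - l 0 * l 2 * N 2 3 + l 0 * l 1 * N 2 4
  - l 0 * l 0 * N 2 5

lemma epsinl (a b : Rp)
    (h : DualNumber.eps * TrivSqZeroExt.inl a = DualNumber.eps * TrivSqZeroExt.inl b) :
    a = b := by
  have := congrArg TrivSqZeroExt.snd h
  simpa using this

lemma key (l : Fin 5 → Rp) (N : Matrix (Fin 6) (Fin 6) Rp) (hsk : Nᵀ = -N) :
    pf (jet1 (Md l) N) = DualNumber.eps * TrivSqZeroExt.inl (Phi0 l N) := by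
  have hs : ∀ i j : Fin 6, N j i = -N i j := fun i j => congrFun (congrFun hsk i) j
  have hd : ∀ i : Fin 6, N i i = 0 := fun i => CharZero.eq_neg_self_iff.mp (hs i i)
  refine TrivSqZeroExt.ext ?_ ?_
  · simp only [pf, subPf_01, subPf_02, subPf_03, subPf_04, subPf_05, jet1, Md, Matrix.of_apply,
      vec6_0, vec6_1, vec6_2, vec6_3, vec6_4, vec6_5,
      TrivSqZeroExt.fst_add, TrivSqZeroExt.fst_mul, TrivSqZeroExt.fst_sub, TrivSqZeroExt.fst_inl,
      DualNumber.fst_eps, TrivSqZeroExt.fst_neg, TrivSqZeroExt.snd_mul, TrivSqZeroExt.snd_add,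
      TrivSqZeroExt.snd_inl, DualNumber.snd_eps]
    ring
  · simp only [pf, subPf_01, subPf_02, subPf_03, subPf_04, subPf_05, jet1, Md, Matrix.of_apply,
      vec6_0, vec6_1, vec6_2, vec6_3, vec6_4, vec6_5,
      TrivSqZeroExt.fst_add, TrivSqZeroExt.fst_mul, TrivSqZeroExt.fst_sub, TrivSqZeroExt.fst_inl,
      DualNumber.fst_eps, TrivSqZeroExt.fst_neg, TrivSqZeroExt.snd_mul, TrivSqZeroExt.snd_add,
      TrivSqZeroExt.snd_sub, TrivSqZeroExt.snd_neg, TrivSqZeroExt.snd_inl, DualNumber.snd_eps,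
      smul_eq_mul, hd, hs 0 1, hs 0 2, hs 0 3, hs 0 4, hs 0 5, hs 1 2, hs 1 3, hs 1 4, hs 1 5,
      hs 2 3, hs 2 4, hs 2 5]
    simp [Phi0, MulOpposite.smul_eq_mul_unop]
    ring

lemma Phi0_homog (l : Fin 5 → Rp) (hl : ∀ i, (l i).IsHomogeneous 1)
    (N : Matrix (Fin 6) (Fin 6) Rp) (hN : ∀ i j, (N i j).IsHomogeneous 1) :
    (Phi0 l N).IsHomogeneous 3 := by
  have h3 : ∀ (a b : Fin 5) (i j : Fin 6), (l a * l b * N i j).IsHomogeneous 3 :=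
    fun a b i j => ((hl a).mul (hl b)).mul (hN i j)
  have hb : ((l 1 * l 3 - l 0 * l 4) * N 1 2).IsHomogeneous 3 :=
    (((hl 1).mul (hl 3)).sub ((hl 0).mul (hl 4))).mul (hN 1 2)
  exact (((((((((((h3 2 4 0 1).sub (h3 2 3 0 2)).sub (h3 2 2 0 3)).add
    (h3 1 2 0 4)).sub (h3 0 2 0 5)).add hb).add (h3 1 2 1 3)).sub
    (h3 1 1 1 4)).add (h3 0 1 1 5)).sub (h3 0 2 2 3)).add (h3 0 1 2 4)).sub (h3 0 0 2 5)

lemma Phi0_add (l : Fin 5 → Rp) (N N' : Matrix (Fin 6) (Fin 6) Rp) :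
    Phi0 l (N + N') = Phi0 l N + Phi0 l N' := by
  simp only [Phi0, Matrix.add_apply]; ring

lemma Phi0_smul (l : Fin 5 → Rp) (c : ℂ) (N : Matrix (Fin 6) (Fin 6) Rp) :
    Phi0 l (c • N) = c • Phi0 l N := by
  simp only [Phi0, Matrix.smul_apply, MvPolynomial.smul_eq_C_mul]; ring

/-- The linearised Pfaffian as a linear map into the cubics. -/
def PhiL (l : Fin 5 → Rp) (hl : ∀ i, (l i).IsHomogeneous 1) : SkewLin →ₗ[ℂ] Cubics where
  toFun N := ⟨Phi0 l N.1, (mem_homogeneousSubmodule _ _).mpr (Phi0_homog l hl N.1 N.2.2)⟩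
  map_add' N N' := Subtype.ext (Phi0_add l N.1 N'.1)
  map_smul' c N := Subtype.ext (Phi0_smul l c N.1)

lemma homog1_mem_spanX (f : Rp) (hf : f.IsHomogeneous 1) :
    f ∈ Submodule.span ℂ (Set.range (X : Fin 5 → Rp)) := by
  rw [f.as_sum]
  refine Submodule.sum_mem _ fun d hd => ?_
  have hdeg : d.degree = 1 := by
    rw [Finsupp.degree_eq_weight_one]; exact hf (MvPolynomial.mem_support_iff.mp hd)
  obtain ⟨j, rfl⟩ : ∃ j, d = Finsupp.single j 1 := by
    have hne : d.support.Nonempty := by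
      by_contra h
      rw [Finset.not_nonempty_iff_eq_empty] at h
      have hd0 : d = 0 := Finsupp.support_eq_empty.mp h
      rw [hd0] at hdeg; simp [Finsupp.degree] at hdeg
    obtain ⟨j, hj⟩ := hne
    refine ⟨j, ?_⟩
    have hcard : d.support.card ≤ 1 := by
      by_contra h
      push_neg at h
      have h2 : d.support.card • 1 ≤ d.support.sum d :=
        Finset.card_nsmul_le_sum _ _ _ fun i hi => by
          have := Finsupp.mem_support_iff.mp hi; omega
      have h4 : d.support.sum d = 1 := hdeg
      simp at h2; omega
    have hsupp : d.support = {j} := Finset.eq_singleton_iff_unique_mem.mpr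
      ⟨hj, fun x hx => Finset.card_le_one.mp hcard x hx j hj⟩
    have hdj : d j = 1 := by
      have h3 : d.degree = d.support.sum d := rfl
      rw [hsupp, Finset.sum_singleton] at h3; omega
    ext x
    rcases eq_or_ne x j with rfl | hx
    · simp [hdj]
    · simp only [Finsupp.single_eq_of_ne' (Ne.symm hx)]
      by_contra h
      exact hx (Finset.mem_singleton.mp (hsupp ▸ Finsupp.mem_support_iff.mpr h))
  have hm : (monomial (Finsupp.single j 1)) (coeff (Finsupp.single j 1) f)
      = coeff (Finsupp.single j 1) f • X j := by
    rw [MvPolynomial.smul_eq_C_mul, MvPolynomial.X, C_mul_monomial, mul_one]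
  rw [hm]
  exact Submodule.smul_mem _ _ (Submodule.subset_span ⟨j, rfl⟩)

lemma spanl_eq_spanX (l : Fin 5 → Rp) (hl : ∀ i, (l i).IsHomogeneous 1)
    (hind : LinearIndependent ℂ l) :
    Submodule.span ℂ (Set.range l) = Submodule.span ℂ (Set.range (X : Fin 5 → Rp)) := by
  have hle : Submodule.span ℂ (Set.range l) ≤ Submodule.span ℂ (Set.range (X : Fin 5 → Rp)) :=
    Submodule.span_le.mpr (by rintro x ⟨i, rfl⟩; exact homog1_mem_spanX _ (hl i))
  have h1 : Module.finrank ℂ (Submodule.span ℂ (Set.range (X : Fin 5 → Rp))) = 5 := by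
    rw [finrank_span_eq_card (MvPolynomial.linearIndependent_X _ _)]; simp
  have h2 : Module.finrank ℂ (Submodule.span ℂ (Set.range l)) = 5 := by
    rw [finrank_span_eq_card hind]; simp
  have : FiniteDimensional ℂ (Submodule.span ℂ (Set.range (X : Fin 5 → Rp))) :=
    FiniteDimensional.span_of_finite _ (Set.finite_range _)
  exact Submodule.eq_of_le_of_finrank_le hle (by rw [h1, h2])

lemma aeval_l_bijective (l : Fin 5 → Rp) (hl : ∀ i, (l i).IsHomogeneous 1)
    (hind : LinearIndependent ℂ l) : Function.Bijective (aeval l : Rp →ₐ[ℂ] Rp) := by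
  have hXmem : ∀ i, (X i : Rp) ∈ Submodule.span ℂ (Set.range l) := fun i => by
    rw [spanl_eq_spanX l hl hind]; exact Submodule.subset_span ⟨i, rfl⟩
  have hlmem : ∀ i, l i ∈ Submodule.span ℂ (Set.range (X : Fin 5 → Rp)) := fun i =>
    homog1_mem_spanX _ (hl i)
  choose Bc hBc using fun i => (Submodule.mem_span_range_iff_exists_fun ℂ).mp (hXmem i)
  choose Ac hAc using fun i => (Submodule.mem_span_range_iff_exists_fun ℂ).mp (hlmem i)
  set τ : Rp →ₐ[ℂ] Rp := aeval (fun i => ∑ j, Bc i j • X j) with hτ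
  have hXlin := MvPolynomial.linearIndependent_X (Fin 5) ℂ
  have key2 : ∀ (Cc Dc : Fin 5 → Fin 5 → ℂ) (v : Fin 5 → Rp),
      (∀ i, ∑ j, Dc i j • X j = v i) →
      ∀ i, (∑ j, Cc i j • v j : Rp) = ∑ k, (∑ j, Cc i j * Dc j k) • X k := by
    intro Cc Dc v hv i
    calc (∑ j, Cc i j • v j : Rp) = ∑ j, Cc i j • (∑ k, Dc j k • X k) := by
          simp only [hv]
      _ = ∑ j, ∑ k, (Cc i j * Dc j k) • X k := by
          simp only [Finset.smul_sum, mul_smul]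
      _ = ∑ k, (∑ j, Cc i j * Dc j k) • X k := by
          rw [Finset.sum_comm]; simp only [Finset.sum_smul]
  have hBA : ∀ i k, (∑ j, Bc i j * Ac j k) = if k = i then 1 else 0 := by
    intro i k
    have hXi : (∑ k, (∑ j, Bc i j * Ac j k) • X k : Rp) = X i := by
      rw [← key2 Bc Ac l hAc i]; exact hBc i
    have h0 : (∑ k, ((∑ j, Bc i j * Ac j k) - if k = i then 1 else 0) • X k : Rp) = 0 := by
      simp only [sub_smul, Finset.sum_sub_distrib, hXi, ite_smul, one_smul, zero_smul]
      simp [Finset.sum_ite_eq']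
    exact sub_eq_zero.mp (Fintype.linearIndependent_iff.mp hXlin _ h0 k)
  have hABmat : Matrix.of Ac * Matrix.of Bc = 1 := by
    rw [mul_eq_one_comm]
    ext i k
    simp only [Matrix.mul_apply, Matrix.of_apply, Matrix.one_apply]
    rw [hBA i k]; simp [eq_comm]
  have hAB : ∀ i k, (∑ j, Ac i j * Bc j k) = if k = i then 1 else 0 := by
    intro i k
    have h5 := congrFun (congrFun hABmat i) k
    simp only [Matrix.mul_apply, Matrix.of_apply, Matrix.one_apply] at h5
    rw [h5]; simp [eq_comm]
  have hστ : ∀ x, aeval l (τ x) = x := by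
    have hc : (aeval l).comp τ = AlgHom.id ℂ Rp := by
      apply MvPolynomial.algHom_ext
      intro i
      simp only [AlgHom.comp_apply, hτ, aeval_X, AlgHom.id_apply, map_sum, _root_.map_smul]
      exact hBc i
    intro x
    exact congrArg (fun f => f x) hc
  have hτσ : ∀ x, τ (aeval l x) = x := by
    have hc : τ.comp (aeval l) = AlgHom.id ℂ Rp := by
      apply MvPolynomial.algHom_ext
      intro i
      simp only [AlgHom.comp_apply, aeval_X, AlgHom.id_apply]
      rw [← hAc i]
      simp only [map_sum, _root_.map_smul, hτ, aeval_X]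
      rw [key2 Ac Bc _ (fun _ => rfl) i]
      simp only [hAB]
      simp [Finset.sum_ite_eq']
    intro x
    exact congrArg (fun f => f x) hc
  exact ⟨Function.LeftInverse.injective hτσ, Function.RightInverse.surjective hστ⟩

/-- Exponent vectors as finitely supported functions. -/
def Ex (v : Fin 5 → ℕ) : Fin 5 →₀ ℕ := Finsupp.equivFunOnFinite.symm v

lemma aeval_Ex (l : Fin 5 → Rp) (v : Fin 5 → ℕ) (c : ℂ) :
    aeval l (monomial (Ex v) c) =
      C c * (l 0 ^ v 0 * (l 1 ^ v 1 * (l 2 ^ v 2 * (l 3 ^ v 3 * l 4 ^ v 4)))) := by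
  rw [aeval_monomial]
  rw [Finsupp.prod_fintype _ _ (fun i => pow_zero (l i))]
  rw [Fin.prod_univ_five]
  simp [Ex, MvPolynomial.algebraMap_eq, mul_assoc]

def Av : ℕ → Fin 5 → ℕ := fun n => match n with
  | 0 => ![3,0,0,0,0]
  | 1 => ![2,1,0,0,0]
  | 2 => ![2,0,1,0,0]
  | 3 => ![2,0,0,1,0]
  | 4 => ![2,0,0,0,1]
  | 5 => ![1,2,0,0,0]
  | 6 => ![1,1,1,0,0]
  | 7 => ![1,1,0,1,0]
  | 8 => ![1,1,0,0,1]
  | 9 => ![1,0,2,0,0]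
  | 10 => ![1,0,1,1,0]
  | 11 => ![1,0,1,0,1]
  | 12 => ![0,3,0,0,0]
  | 13 => ![0,2,1,0,0]
  | 14 => ![0,2,0,1,0]
  | 15 => ![0,2,0,0,1]
  | 16 => ![0,1,2,0,0]
  | 17 => ![0,1,1,1,0]
  | 18 => ![0,1,1,0,1]
  | 19 => ![0,0,3,0,0]
  | 20 => ![0,0,2,1,0]
  | 21 => ![0,0,2,0,1]
  | 22 => ![0,0,1,2,0]
  | 23 => ![0,0,1,1,1]
  | 24 => ![0,0,1,0,2]
  | 25 => ![1,0,0,1,1]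
  | 26 => ![1,0,0,0,2]
  | _ => ![0,0,0,0,0]

def Bv : ℕ → Fin 5 → ℕ := fun n => match n with
  | 0 => ![0,0,0,0,0]
  | 1 => ![0,0,0,0,0]
  | 2 => ![0,0,0,0,0]
  | 3 => ![0,0,0,0,0]
  | 4 => ![0,0,0,0,0]
  | 5 => ![0,0,0,0,0]
  | 6 => ![0,0,0,0,0]
  | 7 => ![0,0,0,0,0]
  | 8 => ![0,0,0,0,0]
  | 9 => ![0,0,0,0,0]
  | 10 => ![0,0,0,0,0]
  | 11 => ![0,0,0,0,0]
  | 12 => ![0,0,0,0,0]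
  | 13 => ![0,0,0,0,0]
  | 14 => ![0,0,0,0,0]
  | 15 => ![0,0,0,0,0]
  | 16 => ![0,0,0,0,0]
  | 17 => ![0,0,0,0,0]
  | 18 => ![0,0,0,0,0]
  | 19 => ![0,0,0,0,0]
  | 20 => ![0,0,0,0,0]
  | 21 => ![0,0,0,0,0]
  | 22 => ![0,0,0,0,0]
  | 23 => ![0,0,0,0,0]
  | 24 => ![0,0,0,0,0]
  | 25 => ![0,1,0,2,0]
  | 26 => ![0,1,0,1,1]
  | _ => ![0,0,0,0,0]

def cDv : ℕ → ℕ := fun n => match n with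
  | 25 => 1
  | 26 => 1
  | _ => 0


def gA : Fin 27 → Fin 5 → ℕ := fun i => Av i.1
def gB : Fin 27 → Fin 5 → ℕ := fun i => Bv i.1
def gcD : Fin 27 → ℕ := fun i => cDv i.1

/-- The 27 spanning cubics (in the variables). -/
def g0 : Fin 27 → Rp := fun i => monomial (Ex (gA i)) 1 - monomial (Ex (gB i)) ((gcD i : ℕ) : ℂ)

lemma hgA_inj : Function.Injective gA := by decide
lemma hBA' : ∀ i j : Fin 27, gcD i = 0 ∨ gB i ≠ gA j := by decide

lemma coeff_g0 (i j : Fin 27) :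
    MvPolynomial.coeff (Ex (gA j)) (g0 i) = if i = j then 1 else 0 := by
  have h1 : MvPolynomial.coeff (Ex (gA j)) (monomial (Ex (gA i)) (1:ℂ))
      = if gA i = gA j then 1 else 0 := by
    rw [MvPolynomial.coeff_monomial]
    simp [Ex, EquivLike.apply_eq_iff_eq]
  have h2 : MvPolynomial.coeff (Ex (gA j)) (monomial (Ex (gB i)) ((gcD i : ℕ) : ℂ)) = 0 := by
    rcases hBA' i j with h | h
    · simp [h]
    · rw [MvPolynomial.coeff_monomial, if_neg]
      simp only [Ex, ne_eq, EmbeddingLike.apply_eq_iff_eq]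
      exact h
  rw [g0, MvPolynomial.coeff_sub, h1, h2, sub_zero]
  by_cases h : i = j
  · simp [h]
  · rw [if_neg (fun hh => h (hgA_inj hh)), if_neg h]

lemma g0_li : LinearIndependent ℂ g0 := by
  rw [Fintype.linearIndependent_iff]
  intro k hk j
  have h2 := congrArg (MvPolynomial.coeff (Ex (gA j))) hk
  simp only [MvPolynomial.coeff_sum, MvPolynomial.coeff_smul, coeff_g0,
    MvPolynomial.coeff_zero, smul_eq_mul, mul_ite, mul_one, mul_zero] at h2
  rw [Finset.sum_ite_eq' Finset.univ j k] at h2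
  simpa using h2

/-- The images of the spanning cubics under substitution by `l`. -/
def glF (l : Fin 5 → Rp) : Fin 27 → Rp := fun i => aeval l (g0 i)

lemma glv0 (l : Fin 5 → Rp) : glF l 0 = l 0 * l 0 * l 0 := by
  show aeval l (g0 0) = _
  rw [show g0 0 = monomial (Ex ![3,0,0,0,0]) (1:ℂ) - monomial (Ex ![0,0,0,0,0]) ((0:ℕ) : ℂ) from rfl,
    map_sub, aeval_Ex, aeval_Ex]
  simp only [vec5_0, vec5_1, vec5_2, vec5_3, vec5_4, pow_zero, pow_one, one_mul, mul_one,
    Nat.cast_zero, Nat.cast_one, MvPolynomial.C_0, MvPolynomial.C_1, zero_mul, sub_zero]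
  ring

lemma glv1 (l : Fin 5 → Rp) : glF l 1 = l 0 * l 0 * l 1 := by
  show aeval l (g0 1) = _
  rw [show g0 1 = monomial (Ex ![2,1,0,0,0]) (1:ℂ) - monomial (Ex ![0,0,0,0,0]) ((0:ℕ) : ℂ) from rfl,
    map_sub, aeval_Ex, aeval_Ex]
  simp only [vec5_0, vec5_1, vec5_2, vec5_3, vec5_4, pow_zero, pow_one, one_mul, mul_one,
    Nat.cast_zero, Nat.cast_one, MvPolynomial.C_0, MvPolynomial.C_1, zero_mul, sub_zero]
  ring

lemma glv2 (l : Fin 5 → Rp) : glF l 2 = l 0 * l 0 * l 2 := by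
  show aeval l (g0 2) = _
  rw [show g0 2 = monomial (Ex ![2,0,1,0,0]) (1:ℂ) - monomial (Ex ![0,0,0,0,0]) ((0:ℕ) : ℂ) from rfl,
    map_sub, aeval_Ex, aeval_Ex]
  simp only [vec5_0, vec5_1, vec5_2, vec5_3, vec5_4, pow_zero, pow_one, one_mul, mul_one,
    Nat.cast_zero, Nat.cast_one, MvPolynomial.C_0, MvPolynomial.C_1, zero_mul, sub_zero]
  ring

lemma glv3 (l : Fin 5 → Rp) : glF l 3 = l 0 * l 0 * l 3 := by
  show aeval l (g0 3) = _
  rw [show g0 3 = monomial (Ex ![2,0,0,1,0]) (1:ℂ) - monomial (Ex ![0,0,0,0,0]) ((0:ℕ) : ℂ) from rfl,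
    map_sub, aeval_Ex, aeval_Ex]
  simp only [vec5_0, vec5_1, vec5_2, vec5_3, vec5_4, pow_zero, pow_one, one_mul, mul_one,
    Nat.cast_zero, Nat.cast_one, MvPolynomial.C_0, MvPolynomial.C_1, zero_mul, sub_zero]
  ring

lemma glv4 (l : Fin 5 → Rp) : glF l 4 = l 0 * l 0 * l 4 := by
  show aeval l (g0 4) = _
  rw [show g0 4 = monomial (Ex ![2,0,0,0,1]) (1:ℂ) - monomial (Ex ![0,0,0,0,0]) ((0:ℕ) : ℂ) from rfl,
    map_sub, aeval_Ex, aeval_Ex]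
  simp only [vec5_0, vec5_1, vec5_2, vec5_3, vec5_4, pow_zero, pow_one, one_mul, mul_one,
    Nat.cast_zero, Nat.cast_one, MvPolynomial.C_0, MvPolynomial.C_1, zero_mul, sub_zero]
  ring

lemma glv5 (l : Fin 5 → Rp) : glF l 5 = l 0 * l 1 * l 1 := by
  show aeval l (g0 5) = _
  rw [show g0 5 = monomial (Ex ![1,2,0,0,0]) (1:ℂ) - monomial (Ex ![0,0,0,0,0]) ((0:ℕ) : ℂ) from rfl,
    map_sub, aeval_Ex, aeval_Ex]
  simp only [vec5_0, vec5_1, vec5_2, vec5_3, vec5_4, pow_zero, pow_one, one_mul, mul_one,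
    Nat.cast_zero, Nat.cast_one, MvPolynomial.C_0, MvPolynomial.C_1, zero_mul, sub_zero]
  ring

lemma glv6 (l : Fin 5 → Rp) : glF l 6 = l 0 * l 1 * l 2 := by
  show aeval l (g0 6) = _
  rw [show g0 6 = monomial (Ex ![1,1,1,0,0]) (1:ℂ) - monomial (Ex ![0,0,0,0,0]) ((0:ℕ) : ℂ) from rfl,
    map_sub, aeval_Ex, aeval_Ex]
  simp only [vec5_0, vec5_1, vec5_2, vec5_3, vec5_4, pow_zero, pow_one, one_mul, mul_one,
    Nat.cast_zero, Nat.cast_one, MvPolynomial.C_0, MvPolynomial.C_1, zero_mul, sub_zero]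
  ring

lemma glv7 (l : Fin 5 → Rp) : glF l 7 = l 0 * l 1 * l 3 := by
  show aeval l (g0 7) = _
  rw [show g0 7 = monomial (Ex ![1,1,0,1,0]) (1:ℂ) - monomial (Ex ![0,0,0,0,0]) ((0:ℕ) : ℂ) from rfl,
    map_sub, aeval_Ex, aeval_Ex]
  simp only [vec5_0, vec5_1, vec5_2, vec5_3, vec5_4, pow_zero, pow_one, one_mul, mul_one,
    Nat.cast_zero, Nat.cast_one, MvPolynomial.C_0, MvPolynomial.C_1, zero_mul, sub_zero]
  ring

lemma glv8 (l : Fin 5 → Rp) : glF l 8 = l 0 * l 1 * l 4 := by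
  show aeval l (g0 8) = _
  rw [show g0 8 = monomial (Ex ![1,1,0,0,1]) (1:ℂ) - monomial (Ex ![0,0,0,0,0]) ((0:ℕ) : ℂ) from rfl,
    map_sub, aeval_Ex, aeval_Ex]
  simp only [vec5_0, vec5_1, vec5_2, vec5_3, vec5_4, pow_zero, pow_one, one_mul, mul_one,
    Nat.cast_zero, Nat.cast_one, MvPolynomial.C_0, MvPolynomial.C_1, zero_mul, sub_zero]
  ring

lemma glv9 (l : Fin 5 → Rp) : glF l 9 = l 0 * l 2 * l 2 := by
  show aeval l (g0 9) = _
  rw [show g0 9 = monomial (Ex ![1,0,2,0,0]) (1:ℂ) - monomial (Ex ![0,0,0,0,0]) ((0:ℕ) : ℂ) from rfl,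
    map_sub, aeval_Ex, aeval_Ex]
  simp only [vec5_0, vec5_1, vec5_2, vec5_3, vec5_4, pow_zero, pow_one, one_mul, mul_one,
    Nat.cast_zero, Nat.cast_one, MvPolynomial.C_0, MvPolynomial.C_1, zero_mul, sub_zero]
  ring

lemma glv10 (l : Fin 5 → Rp) : glF l 10 = l 0 * l 2 * l 3 := by
  show aeval l (g0 10) = _
  rw [show g0 10 = monomial (Ex ![1,0,1,1,0]) (1:ℂ) - monomial (Ex ![0,0,0,0,0]) ((0:ℕ) : ℂ) from rfl,
    map_sub, aeval_Ex, aeval_Ex]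
  simp only [vec5_0, vec5_1, vec5_2, vec5_3, vec5_4, pow_zero, pow_one, one_mul, mul_one,
    Nat.cast_zero, Nat.cast_one, MvPolynomial.C_0, MvPolynomial.C_1, zero_mul, sub_zero]
  ring

lemma glv11 (l : Fin 5 → Rp) : glF l 11 = l 0 * l 2 * l 4 := by
  show aeval l (g0 11) = _
  rw [show g0 11 = monomial (Ex ![1,0,1,0,1]) (1:ℂ) - monomial (Ex ![0,0,0,0,0]) ((0:ℕ) : ℂ) from rfl,
    map_sub, aeval_Ex, aeval_Ex]
  simp only [vec5_0, vec5_1, vec5_2, vec5_3, vec5_4, pow_zero, pow_one, one_mul, mul_one,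
    Nat.cast_zero, Nat.cast_one, MvPolynomial.C_0, MvPolynomial.C_1, zero_mul, sub_zero]
  ring

lemma glv12 (l : Fin 5 → Rp) : glF l 12 = l 1 * l 1 * l 1 := by
  show aeval l (g0 12) = _
  rw [show g0 12 = monomial (Ex ![0,3,0,0,0]) (1:ℂ) - monomial (Ex ![0,0,0,0,0]) ((0:ℕ) : ℂ) from rfl,
    map_sub, aeval_Ex, aeval_Ex]
  simp only [vec5_0, vec5_1, vec5_2, vec5_3, vec5_4, pow_zero, pow_one, one_mul, mul_one,
    Nat.cast_zero, Nat.cast_one, MvPolynomial.C_0, MvPolynomial.C_1, zero_mul, sub_zero]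
  ring

lemma glv13 (l : Fin 5 → Rp) : glF l 13 = l 1 * l 1 * l 2 := by
  show aeval l (g0 13) = _
  rw [show g0 13 = monomial (Ex ![0,2,1,0,0]) (1:ℂ) - monomial (Ex ![0,0,0,0,0]) ((0:ℕ) : ℂ) from rfl,
    map_sub, aeval_Ex, aeval_Ex]
  simp only [vec5_0, vec5_1, vec5_2, vec5_3, vec5_4, pow_zero, pow_one, one_mul, mul_one,
    Nat.cast_zero, Nat.cast_one, MvPolynomial.C_0, MvPolynomial.C_1, zero_mul, sub_zero]
  ring

lemma glv14 (l : Fin 5 → Rp) : glF l 14 = l 1 * l 1 * l 3 := by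
  show aeval l (g0 14) = _
  rw [show g0 14 = monomial (Ex ![0,2,0,1,0]) (1:ℂ) - monomial (Ex ![0,0,0,0,0]) ((0:ℕ) : ℂ) from rfl,
    map_sub, aeval_Ex, aeval_Ex]
  simp only [vec5_0, vec5_1, vec5_2, vec5_3, vec5_4, pow_zero, pow_one, one_mul, mul_one,
    Nat.cast_zero, Nat.cast_one, MvPolynomial.C_0, MvPolynomial.C_1, zero_mul, sub_zero]
  ring

lemma glv15 (l : Fin 5 → Rp) : glF l 15 = l 1 * l 1 * l 4 := by
  show aeval l (g0 15) = _
  rw [show g0 15 = monomial (Ex ![0,2,0,0,1]) (1:ℂ) - monomial (Ex ![0,0,0,0,0]) ((0:ℕ) : ℂ) from rfl,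
    map_sub, aeval_Ex, aeval_Ex]
  simp only [vec5_0, vec5_1, vec5_2, vec5_3, vec5_4, pow_zero, pow_one, one_mul, mul_one,
    Nat.cast_zero, Nat.cast_one, MvPolynomial.C_0, MvPolynomial.C_1, zero_mul, sub_zero]
  ring

lemma glv16 (l : Fin 5 → Rp) : glF l 16 = l 1 * l 2 * l 2 := by
  show aeval l (g0 16) = _
  rw [show g0 16 = monomial (Ex ![0,1,2,0,0]) (1:ℂ) - monomial (Ex ![0,0,0,0,0]) ((0:ℕ) : ℂ) from rfl,
    map_sub, aeval_Ex, aeval_Ex]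
  simp only [vec5_0, vec5_1, vec5_2, vec5_3, vec5_4, pow_zero, pow_one, one_mul, mul_one,
    Nat.cast_zero, Nat.cast_one, MvPolynomial.C_0, MvPolynomial.C_1, zero_mul, sub_zero]
  ring

lemma glv17 (l : Fin 5 → Rp) : glF l 17 = l 1 * l 2 * l 3 := by
  show aeval l (g0 17) = _
  rw [show g0 17 = monomial (Ex ![0,1,1,1,0]) (1:ℂ) - monomial (Ex ![0,0,0,0,0]) ((0:ℕ) : ℂ) from rfl,
    map_sub, aeval_Ex, aeval_Ex]
  simp only [vec5_0, vec5_1, vec5_2, vec5_3, vec5_4, pow_zero, pow_one, one_mul, mul_one,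
    Nat.cast_zero, Nat.cast_one, MvPolynomial.C_0, MvPolynomial.C_1, zero_mul, sub_zero]
  ring

lemma glv18 (l : Fin 5 → Rp) : glF l 18 = l 1 * l 2 * l 4 := by
  show aeval l (g0 18) = _
  rw [show g0 18 = monomial (Ex ![0,1,1,0,1]) (1:ℂ) - monomial (Ex ![0,0,0,0,0]) ((0:ℕ) : ℂ) from rfl,
    map_sub, aeval_Ex, aeval_Ex]
  simp only [vec5_0, vec5_1, vec5_2, vec5_3, vec5_4, pow_zero, pow_one, one_mul, mul_one,
    Nat.cast_zero, Nat.cast_one, MvPolynomial.C_0, MvPolynomial.C_1, zero_mul, sub_zero]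
  ring

lemma glv19 (l : Fin 5 → Rp) : glF l 19 = l 2 * l 2 * l 2 := by
  show aeval l (g0 19) = _
  rw [show g0 19 = monomial (Ex ![0,0,3,0,0]) (1:ℂ) - monomial (Ex ![0,0,0,0,0]) ((0:ℕ) : ℂ) from rfl,
    map_sub, aeval_Ex, aeval_Ex]
  simp only [vec5_0, vec5_1, vec5_2, vec5_3, vec5_4, pow_zero, pow_one, one_mul, mul_one,
    Nat.cast_zero, Nat.cast_one, MvPolynomial.C_0, MvPolynomial.C_1, zero_mul, sub_zero]
  ring

lemma glv20 (l : Fin 5 → Rp) : glF l 20 = l 2 * l 2 * l 3 := by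
  show aeval l (g0 20) = _
  rw [show g0 20 = monomial (Ex ![0,0,2,1,0]) (1:ℂ) - monomial (Ex ![0,0,0,0,0]) ((0:ℕ) : ℂ) from rfl,
    map_sub, aeval_Ex, aeval_Ex]
  simp only [vec5_0, vec5_1, vec5_2, vec5_3, vec5_4, pow_zero, pow_one, one_mul, mul_one,
    Nat.cast_zero, Nat.cast_one, MvPolynomial.C_0, MvPolynomial.C_1, zero_mul, sub_zero]
  ring

lemma glv21 (l : Fin 5 → Rp) : glF l 21 = l 2 * l 2 * l 4 := by
  show aeval l (g0 21) = _
  rw [show g0 21 = monomial (Ex ![0,0,2,0,1]) (1:ℂ) - monomial (Ex ![0,0,0,0,0]) ((0:ℕ) : ℂ) from rfl,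
    map_sub, aeval_Ex, aeval_Ex]
  simp only [vec5_0, vec5_1, vec5_2, vec5_3, vec5_4, pow_zero, pow_one, one_mul, mul_one,
    Nat.cast_zero, Nat.cast_one, MvPolynomial.C_0, MvPolynomial.C_1, zero_mul, sub_zero]
  ring

lemma glv22 (l : Fin 5 → Rp) : glF l 22 = l 2 * l 3 * l 3 := by
  show aeval l (g0 22) = _
  rw [show g0 22 = monomial (Ex ![0,0,1,2,0]) (1:ℂ) - monomial (Ex ![0,0,0,0,0]) ((0:ℕ) : ℂ) from rfl,
    map_sub, aeval_Ex, aeval_Ex]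
  simp only [vec5_0, vec5_1, vec5_2, vec5_3, vec5_4, pow_zero, pow_one, one_mul, mul_one,
    Nat.cast_zero, Nat.cast_one, MvPolynomial.C_0, MvPolynomial.C_1, zero_mul, sub_zero]
  ring

lemma glv23 (l : Fin 5 → Rp) : glF l 23 = l 2 * l 3 * l 4 := by
  show aeval l (g0 23) = _
  rw [show g0 23 = monomial (Ex ![0,0,1,1,1]) (1:ℂ) - monomial (Ex ![0,0,0,0,0]) ((0:ℕ) : ℂ) from rfl,
    map_sub, aeval_Ex, aeval_Ex]
  simp only [vec5_0, vec5_1, vec5_2, vec5_3, vec5_4, pow_zero, pow_one, one_mul, mul_one,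
    Nat.cast_zero, Nat.cast_one, MvPolynomial.C_0, MvPolynomial.C_1, zero_mul, sub_zero]
  ring

lemma glv24 (l : Fin 5 → Rp) : glF l 24 = l 2 * l 4 * l 4 := by
  show aeval l (g0 24) = _
  rw [show g0 24 = monomial (Ex ![0,0,1,0,2]) (1:ℂ) - monomial (Ex ![0,0,0,0,0]) ((0:ℕ) : ℂ) from rfl,
    map_sub, aeval_Ex, aeval_Ex]
  simp only [vec5_0, vec5_1, vec5_2, vec5_3, vec5_4, pow_zero, pow_one, one_mul, mul_one,
    Nat.cast_zero, Nat.cast_one, MvPolynomial.C_0, MvPolynomial.C_1, zero_mul, sub_zero]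
  ring

lemma glv25 (l : Fin 5 → Rp) : glF l 25 = l 0 * l 3 * l 4 - l 1 * l 3 * l 3 := by
  show aeval l (g0 25) = _
  rw [show g0 25 = monomial (Ex ![1,0,0,1,1]) (1:ℂ) - monomial (Ex ![0,1,0,2,0]) ((1:ℕ) : ℂ) from rfl,
    map_sub, aeval_Ex, aeval_Ex]
  simp only [vec5_0, vec5_1, vec5_2, vec5_3, vec5_4, pow_zero, pow_one, one_mul, mul_one,
    Nat.cast_zero, Nat.cast_one, MvPolynomial.C_0, MvPolynomial.C_1, zero_mul, sub_zero]
  ring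

lemma glv26 (l : Fin 5 → Rp) : glF l 26 = l 0 * l 4 * l 4 - l 1 * l 3 * l 4 := by
  show aeval l (g0 26) = _
  rw [show g0 26 = monomial (Ex ![1,0,0,0,2]) (1:ℂ) - monomial (Ex ![0,1,0,1,1]) ((1:ℕ) : ℂ) from rfl,
    map_sub, aeval_Ex, aeval_Ex]
  simp only [vec5_0, vec5_1, vec5_2, vec5_3, vec5_4, pow_zero, pow_one, one_mul, mul_one,
    Nat.cast_zero, Nat.cast_one, MvPolynomial.C_0, MvPolynomial.C_1, zero_mul, sub_zero]
  ring


/-- Elementary skew matrices. -/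
def Esk (a b : Fin 6) (v : Rp) : Matrix (Fin 6) (Fin 6) Rp :=
  Matrix.of fun i j => if i = a ∧ j = b then v else if i = b ∧ j = a then -v else 0

lemma Esk_mem (a b : Fin 6) (hab : a ≠ b) (v : Rp) (hv : v.IsHomogeneous 1) :
    Esk a b v ∈ SkewLin := by
  constructor
  · ext i j
    simp only [Matrix.transpose_apply, Matrix.neg_apply, Esk, Matrix.of_apply]
    by_cases h1 : i = a <;> by_cases h2 : j = b <;> by_cases h3 : i = b <;> by_cases h4 : j = a <;>
      simp_all
  · intro i j
    simp only [Esk, Matrix.of_apply]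
    split_ifs
    · exact hv
    · exact hv.neg
    · simpa using MvPolynomial.isHomogeneous_zero (Fin 5) ℂ 1

lemma PhiEsk01 (l : Fin 5 → Rp) (v : Rp) :
    Phi0 l (Esk 0 1 v) = (l 2 * l 4 * v) := by
  simp only [Phi0, Esk, Matrix.of_apply]
  simp +decide
  try ring

lemma PhiEsk02 (l : Fin 5 → Rp) (v : Rp) :
    Phi0 l (Esk 0 2 v) = -(l 2 * l 3 * v) := by
  simp only [Phi0, Esk, Matrix.of_apply]
  simp +decide
  try ring

lemma PhiEsk03 (l : Fin 5 → Rp) (v : Rp) :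
    Phi0 l (Esk 0 3 v) = -(l 2 * l 2 * v) := by
  simp only [Phi0, Esk, Matrix.of_apply]
  simp +decide
  try ring

lemma PhiEsk04 (l : Fin 5 → Rp) (v : Rp) :
    Phi0 l (Esk 0 4 v) = (l 1 * l 2 * v) := by
  simp only [Phi0, Esk, Matrix.of_apply]
  simp +decide
  try ring

lemma PhiEsk05 (l : Fin 5 → Rp) (v : Rp) :
    Phi0 l (Esk 0 5 v) = -(l 0 * l 2 * v) := by
  simp only [Phi0, Esk, Matrix.of_apply]
  simp +decide
  try ring

lemma PhiEsk12 (l : Fin 5 → Rp) (v : Rp) :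
    Phi0 l (Esk 1 2 v) = ((l 1 * l 3 - l 0 * l 4) * v) := by
  simp only [Phi0, Esk, Matrix.of_apply]
  simp +decide
  try ring

lemma PhiEsk13 (l : Fin 5 → Rp) (v : Rp) :
    Phi0 l (Esk 1 3 v) = (l 1 * l 2 * v) := by
  simp only [Phi0, Esk, Matrix.of_apply]
  simp +decide
  try ring

lemma PhiEsk14 (l : Fin 5 → Rp) (v : Rp) :
    Phi0 l (Esk 1 4 v) = -(l 1 * l 1 * v) := by
  simp only [Phi0, Esk, Matrix.of_apply]
  simp +decide
  try ring

lemma PhiEsk15 (l : Fin 5 → Rp) (v : Rp) :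
    Phi0 l (Esk 1 5 v) = (l 0 * l 1 * v) := by
  simp only [Phi0, Esk, Matrix.of_apply]
  simp +decide
  try ring

lemma PhiEsk23 (l : Fin 5 → Rp) (v : Rp) :
    Phi0 l (Esk 2 3 v) = -(l 0 * l 2 * v) := by
  simp only [Phi0, Esk, Matrix.of_apply]
  simp +decide
  try ring

lemma PhiEsk24 (l : Fin 5 → Rp) (v : Rp) :
    Phi0 l (Esk 2 4 v) = (l 0 * l 1 * v) := by
  simp only [Phi0, Esk, Matrix.of_apply]
  simp +decide
  try ring

lemma PhiEsk25 (l : Fin 5 → Rp) (v : Rp) :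
    Phi0 l (Esk 2 5 v) = -(l 0 * l 0 * v) := by
  simp only [Phi0, Esk, Matrix.of_apply]
  simp +decide
  try ring

open Submodule in

set_option maxHeartbeats 2000000 in
lemma range_eq (l : Fin 5 → Rp) (hl : ∀ i, (l i).IsHomogeneous 1)
    (hind : LinearIndependent ℂ l) :
    Submodule.map Cubics.subtype (LinearMap.range (PhiL l hl)) =
      Submodule.span ℂ (Set.range (glF l)) := by
  set S := Submodule.span ℂ (Set.range (glF l)) with hS
  set T := Submodule.map Cubics.subtype (LinearMap.range (PhiL l hl)) with hT
  have hTmem : ∀ (E : Matrix (Fin 6) (Fin 6) Rp) (hE : E ∈ SkewLin), Phi0 l E ∈ T :=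
    fun E hE => ⟨(PhiL l hl) ⟨E, hE⟩, ⟨⟨E, hE⟩, rfl⟩, rfl⟩
  apply le_antisymm
  · -- range of Φ is contained in the span of the 27 cubics
    rintro x ⟨y, ⟨E, rfl⟩, rfl⟩
    show Phi0 l E.1 ∈ S
    have hspan : ∀ i j, E.1 i j ∈ Submodule.span ℂ (Set.range l) := fun i j => by
      rw [spanl_eq_spanX l hl hind]
      exact homog1_mem_spanX _ (E.2.2 i j)
    have hmul : ∀ (q : Rp), (∀ k : Fin 5, q * l k ∈ S) →
        ∀ v, v ∈ Submodule.span ℂ (Set.range l) → q * v ∈ S := by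
      intro q hq v hv
      refine Submodule.span_induction ?_ ?_ ?_ ?_ hv
      · rintro x ⟨kk, rfl⟩; exact hq kk
      · rw [mul_zero]; exact S.zero_mem
      · intro x y _ _ hx hy; rw [mul_add]; exact S.add_mem hx hy
      · intro c x _ hx; rw [Algebra.mul_smul_comm]; exact S.smul_mem c hx

    have hq01 : ∀ k : Fin 5, (l 2 * l 4) * l k ∈ S := by
      intro k
      fin_cases k
      · show l 2 * l 4 * l 0 ∈ S
        have he : l 2 * l 4 * l 0 = glF l 11 := by rw [glv11]; try ring
        rw [he]; exact Submodule.subset_span ⟨11, rfl⟩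
      · show l 2 * l 4 * l 1 ∈ S
        have he : l 2 * l 4 * l 1 = glF l 18 := by rw [glv18]; try ring
        rw [he]; exact Submodule.subset_span ⟨18, rfl⟩
      · show l 2 * l 4 * l 2 ∈ S
        have he : l 2 * l 4 * l 2 = glF l 21 := by rw [glv21]; try ring
        rw [he]; exact Submodule.subset_span ⟨21, rfl⟩
      · show l 2 * l 4 * l 3 ∈ S
        have he : l 2 * l 4 * l 3 = glF l 23 := by rw [glv23]; try ring
        rw [he]; exact Submodule.subset_span ⟨23, rfl⟩
      · show l 2 * l 4 * l 4 ∈ S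
        have he : l 2 * l 4 * l 4 = glF l 24 := by rw [glv24]; try ring
        rw [he]; exact Submodule.subset_span ⟨24, rfl⟩

    have hq02 : ∀ k : Fin 5, (l 2 * l 3) * l k ∈ S := by
      intro k
      fin_cases k
      · show l 2 * l 3 * l 0 ∈ S
        have he : l 2 * l 3 * l 0 = glF l 10 := by rw [glv10]; try ring
        rw [he]; exact Submodule.subset_span ⟨10, rfl⟩
      · show l 2 * l 3 * l 1 ∈ S
        have he : l 2 * l 3 * l 1 = glF l 17 := by rw [glv17]; try ring
        rw [he]; exact Submodule.subset_span ⟨17, rfl⟩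
      · show l 2 * l 3 * l 2 ∈ S
        have he : l 2 * l 3 * l 2 = glF l 20 := by rw [glv20]; try ring
        rw [he]; exact Submodule.subset_span ⟨20, rfl⟩
      · show l 2 * l 3 * l 3 ∈ S
        have he : l 2 * l 3 * l 3 = glF l 22 := by rw [glv22]; try ring
        rw [he]; exact Submodule.subset_span ⟨22, rfl⟩
      · show l 2 * l 3 * l 4 ∈ S
        have he : l 2 * l 3 * l 4 = glF l 23 := by rw [glv23]; try ring
        rw [he]; exact Submodule.subset_span ⟨23, rfl⟩

    have hq03 : ∀ k : Fin 5, (l 2 * l 2) * l k ∈ S := by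
      intro k
      fin_cases k
      · show l 2 * l 2 * l 0 ∈ S
        have he : l 2 * l 2 * l 0 = glF l 9 := by rw [glv9]; try ring
        rw [he]; exact Submodule.subset_span ⟨9, rfl⟩
      · show l 2 * l 2 * l 1 ∈ S
        have he : l 2 * l 2 * l 1 = glF l 16 := by rw [glv16]; try ring
        rw [he]; exact Submodule.subset_span ⟨16, rfl⟩
      · show l 2 * l 2 * l 2 ∈ S
        have he : l 2 * l 2 * l 2 = glF l 19 := by rw [glv19]; try ring
        rw [he]; exact Submodule.subset_span ⟨19, rfl⟩
      · show l 2 * l 2 * l 3 ∈ S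
        have he : l 2 * l 2 * l 3 = glF l 20 := by rw [glv20]; try ring
        rw [he]; exact Submodule.subset_span ⟨20, rfl⟩
      · show l 2 * l 2 * l 4 ∈ S
        have he : l 2 * l 2 * l 4 = glF l 21 := by rw [glv21]; try ring
        rw [he]; exact Submodule.subset_span ⟨21, rfl⟩

    have hq04 : ∀ k : Fin 5, (l 1 * l 2) * l k ∈ S := by
      intro k
      fin_cases k
      · show l 1 * l 2 * l 0 ∈ S
        have he : l 1 * l 2 * l 0 = glF l 6 := by rw [glv6]; try ring
        rw [he]; exact Submodule.subset_span ⟨6, rfl⟩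
      · show l 1 * l 2 * l 1 ∈ S
        have he : l 1 * l 2 * l 1 = glF l 13 := by rw [glv13]; try ring
        rw [he]; exact Submodule.subset_span ⟨13, rfl⟩
      · show l 1 * l 2 * l 2 ∈ S
        have he : l 1 * l 2 * l 2 = glF l 16 := by rw [glv16]; try ring
        rw [he]; exact Submodule.subset_span ⟨16, rfl⟩
      · show l 1 * l 2 * l 3 ∈ S
        have he : l 1 * l 2 * l 3 = glF l 17 := by rw [glv17]; try ring
        rw [he]; exact Submodule.subset_span ⟨17, rfl⟩
      · show l 1 * l 2 * l 4 ∈ S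
        have he : l 1 * l 2 * l 4 = glF l 18 := by rw [glv18]; try ring
        rw [he]; exact Submodule.subset_span ⟨18, rfl⟩

    have hq05 : ∀ k : Fin 5, (l 0 * l 2) * l k ∈ S := by
      intro k
      fin_cases k
      · show l 0 * l 2 * l 0 ∈ S
        have he : l 0 * l 2 * l 0 = glF l 2 := by rw [glv2]; try ring
        rw [he]; exact Submodule.subset_span ⟨2, rfl⟩
      · show l 0 * l 2 * l 1 ∈ S
        have he : l 0 * l 2 * l 1 = glF l 6 := by rw [glv6]; try ring
        rw [he]; exact Submodule.subset_span ⟨6, rfl⟩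
      · show l 0 * l 2 * l 2 ∈ S
        have he : l 0 * l 2 * l 2 = glF l 9 := by rw [glv9]; try ring
        rw [he]; exact Submodule.subset_span ⟨9, rfl⟩
      · show l 0 * l 2 * l 3 ∈ S
        have he : l 0 * l 2 * l 3 = glF l 10 := by rw [glv10]; try ring
        rw [he]; exact Submodule.subset_span ⟨10, rfl⟩
      · show l 0 * l 2 * l 4 ∈ S
        have he : l 0 * l 2 * l 4 = glF l 11 := by rw [glv11]; try ring
        rw [he]; exact Submodule.subset_span ⟨11, rfl⟩

    have hq14 : ∀ k : Fin 5, (l 1 * l 1) * l k ∈ S := by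
      intro k
      fin_cases k
      · show l 1 * l 1 * l 0 ∈ S
        have he : l 1 * l 1 * l 0 = glF l 5 := by rw [glv5]; try ring
        rw [he]; exact Submodule.subset_span ⟨5, rfl⟩
      · show l 1 * l 1 * l 1 ∈ S
        have he : l 1 * l 1 * l 1 = glF l 12 := by rw [glv12]; try ring
        rw [he]; exact Submodule.subset_span ⟨12, rfl⟩
      · show l 1 * l 1 * l 2 ∈ S
        have he : l 1 * l 1 * l 2 = glF l 13 := by rw [glv13]; try ring
        rw [he]; exact Submodule.subset_span ⟨13, rfl⟩
      · show l 1 * l 1 * l 3 ∈ S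
        have he : l 1 * l 1 * l 3 = glF l 14 := by rw [glv14]; try ring
        rw [he]; exact Submodule.subset_span ⟨14, rfl⟩
      · show l 1 * l 1 * l 4 ∈ S
        have he : l 1 * l 1 * l 4 = glF l 15 := by rw [glv15]; try ring
        rw [he]; exact Submodule.subset_span ⟨15, rfl⟩

    have hq15 : ∀ k : Fin 5, (l 0 * l 1) * l k ∈ S := by
      intro k
      fin_cases k
      · show l 0 * l 1 * l 0 ∈ S
        have he : l 0 * l 1 * l 0 = glF l 1 := by rw [glv1]; try ring
        rw [he]; exact Submodule.subset_span ⟨1, rfl⟩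
      · show l 0 * l 1 * l 1 ∈ S
        have he : l 0 * l 1 * l 1 = glF l 5 := by rw [glv5]; try ring
        rw [he]; exact Submodule.subset_span ⟨5, rfl⟩
      · show l 0 * l 1 * l 2 ∈ S
        have he : l 0 * l 1 * l 2 = glF l 6 := by rw [glv6]; try ring
        rw [he]; exact Submodule.subset_span ⟨6, rfl⟩
      · show l 0 * l 1 * l 3 ∈ S
        have he : l 0 * l 1 * l 3 = glF l 7 := by rw [glv7]; try ring
        rw [he]; exact Submodule.subset_span ⟨7, rfl⟩
      · show l 0 * l 1 * l 4 ∈ S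
        have he : l 0 * l 1 * l 4 = glF l 8 := by rw [glv8]; try ring
        rw [he]; exact Submodule.subset_span ⟨8, rfl⟩

    have hq25 : ∀ k : Fin 5, (l 0 * l 0) * l k ∈ S := by
      intro k
      fin_cases k
      · show l 0 * l 0 * l 0 ∈ S
        have he : l 0 * l 0 * l 0 = glF l 0 := by rw [glv0]; try ring
        rw [he]; exact Submodule.subset_span ⟨0, rfl⟩
      · show l 0 * l 0 * l 1 ∈ S
        have he : l 0 * l 0 * l 1 = glF l 1 := by rw [glv1]; try ring
        rw [he]; exact Submodule.subset_span ⟨1, rfl⟩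
      · show l 0 * l 0 * l 2 ∈ S
        have he : l 0 * l 0 * l 2 = glF l 2 := by rw [glv2]; try ring
        rw [he]; exact Submodule.subset_span ⟨2, rfl⟩
      · show l 0 * l 0 * l 3 ∈ S
        have he : l 0 * l 0 * l 3 = glF l 3 := by rw [glv3]; try ring
        rw [he]; exact Submodule.subset_span ⟨3, rfl⟩
      · show l 0 * l 0 * l 4 ∈ S
        have he : l 0 * l 0 * l 4 = glF l 4 := by rw [glv4]; try ring
        rw [he]; exact Submodule.subset_span ⟨4, rfl⟩

    have hq12 : ∀ k : Fin 5, (l 1 * l 3 - l 0 * l 4) * l k ∈ S := by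
      intro k
      fin_cases k
      · show (l 1 * l 3 - l 0 * l 4) * l 0 ∈ S
        have he : (l 1 * l 3 - l 0 * l 4) * l 0 = glF l 7 - glF l 4 := by rw [glv7, glv4]; try ring
        rw [he]; exact Submodule.sub_mem _ (Submodule.subset_span ⟨7, rfl⟩) (Submodule.subset_span ⟨4, rfl⟩)
      · show (l 1 * l 3 - l 0 * l 4) * l 1 ∈ S
        have he : (l 1 * l 3 - l 0 * l 4) * l 1 = glF l 14 - glF l 8 := by rw [glv14, glv8]; try ring
        rw [he]; exact Submodule.sub_mem _ (Submodule.subset_span ⟨14, rfl⟩) (Submodule.subset_span ⟨8, rfl⟩)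
      · show (l 1 * l 3 - l 0 * l 4) * l 2 ∈ S
        have he : (l 1 * l 3 - l 0 * l 4) * l 2 = glF l 17 - glF l 11 := by rw [glv17, glv11]; try ring
        rw [he]; exact Submodule.sub_mem _ (Submodule.subset_span ⟨17, rfl⟩) (Submodule.subset_span ⟨11, rfl⟩)
      · show (l 1 * l 3 - l 0 * l 4) * l 3 ∈ S
        have he : (l 1 * l 3 - l 0 * l 4) * l 3 = -glF l 25 := by rw [glv25]; try ring
        rw [he]; exact Submodule.neg_mem _ (Submodule.subset_span ⟨25, rfl⟩)
      · show (l 1 * l 3 - l 0 * l 4) * l 4 ∈ S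
        have he : (l 1 * l 3 - l 0 * l 4) * l 4 = -glF l 26 := by rw [glv26]; try ring
        rw [he]; exact Submodule.neg_mem _ (Submodule.subset_span ⟨26, rfl⟩)

    have t01 := hmul _ hq01 _ (hspan 0 1)
    have t02 := hmul _ hq02 _ (hspan 0 2)
    have t03 := hmul _ hq03 _ (hspan 0 3)
    have t04 := hmul _ hq04 _ (hspan 0 4)
    have t05 := hmul _ hq05 _ (hspan 0 5)
    have t12 := hmul _ hq12 _ (hspan 1 2)
    have t13 := hmul _ hq04 _ (hspan 1 3)
    have t14 := hmul _ hq14 _ (hspan 1 4)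
    have t15 := hmul _ hq15 _ (hspan 1 5)
    have t23 := hmul _ hq05 _ (hspan 2 3)
    have t24 := hmul _ hq15 _ (hspan 2 4)
    have t25 := hmul _ hq25 _ (hspan 2 5)
    show _ - _ - _ + _ - _ + _ + _ - _ + _ - _ + _ - _ ∈ S
    exact Submodule.sub_mem _ (Submodule.add_mem _ (Submodule.sub_mem _ (Submodule.add_mem _
      (Submodule.sub_mem _ (Submodule.add_mem _ (Submodule.add_mem _ (Submodule.sub_mem _
      (Submodule.add_mem _ (Submodule.sub_mem _ (Submodule.sub_mem _ t01 t02) t03) t04) t05)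
      t12) t13) t14) t15) t23) t24) t25
  · -- the 27 cubics all lie in the range of Φ
    rw [hS, Submodule.span_le]
    rintro x ⟨i, rfl⟩
    fin_cases i

    · show glF l 0 ∈ (T : Set Rp)
      have he : glF l 0 = -Phi0 l (Esk 2 5 (l 0)) := by
        rw [glv0, PhiEsk25]; try ring
      rw [he]; exact Submodule.neg_mem _ (hTmem _ (Esk_mem 2 5 (by decide) _ (hl 0)))

    · show glF l 1 ∈ (T : Set Rp)
      have he : glF l 1 = Phi0 l (Esk 1 5 (l 0)) := by
        rw [glv1, PhiEsk15]; try ring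
      rw [he]; exact hTmem _ (Esk_mem 1 5 (by decide) _ (hl 0))

    · show glF l 2 ∈ (T : Set Rp)
      have he : glF l 2 = -Phi0 l (Esk 0 5 (l 0)) := by
        rw [glv2, PhiEsk05]; try ring
      rw [he]; exact Submodule.neg_mem _ (hTmem _ (Esk_mem 0 5 (by decide) _ (hl 0)))

    · show glF l 3 ∈ (T : Set Rp)
      have he : glF l 3 = -Phi0 l (Esk 2 5 (l 3)) := by
        rw [glv3, PhiEsk25]; try ring
      rw [he]; exact Submodule.neg_mem _ (hTmem _ (Esk_mem 2 5 (by decide) _ (hl 3)))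

    · show glF l 4 ∈ (T : Set Rp)
      have he : glF l 4 = -Phi0 l (Esk 2 5 (l 4)) := by
        rw [glv4, PhiEsk25]; try ring
      rw [he]; exact Submodule.neg_mem _ (hTmem _ (Esk_mem 2 5 (by decide) _ (hl 4)))

    · show glF l 5 ∈ (T : Set Rp)
      have he : glF l 5 = -Phi0 l (Esk 1 4 (l 0)) := by
        rw [glv5, PhiEsk14]; try ring
      rw [he]; exact Submodule.neg_mem _ (hTmem _ (Esk_mem 1 4 (by decide) _ (hl 0)))

    · show glF l 6 ∈ (T : Set Rp)
      have he : glF l 6 = Phi0 l (Esk 0 4 (l 0)) := by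
        rw [glv6, PhiEsk04]; try ring
      rw [he]; exact hTmem _ (Esk_mem 0 4 (by decide) _ (hl 0))

    · show glF l 7 ∈ (T : Set Rp)
      have he : glF l 7 = Phi0 l (Esk 1 5 (l 3)) := by
        rw [glv7, PhiEsk15]; try ring
      rw [he]; exact hTmem _ (Esk_mem 1 5 (by decide) _ (hl 3))

    · show glF l 8 ∈ (T : Set Rp)
      have he : glF l 8 = Phi0 l (Esk 1 5 (l 4)) := by
        rw [glv8, PhiEsk15]; try ring
      rw [he]; exact hTmem _ (Esk_mem 1 5 (by decide) _ (hl 4))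

    · show glF l 9 ∈ (T : Set Rp)
      have he : glF l 9 = -Phi0 l (Esk 0 3 (l 0)) := by
        rw [glv9, PhiEsk03]; try ring
      rw [he]; exact Submodule.neg_mem _ (hTmem _ (Esk_mem 0 3 (by decide) _ (hl 0)))

    · show glF l 10 ∈ (T : Set Rp)
      have he : glF l 10 = -Phi0 l (Esk 0 2 (l 0)) := by
        rw [glv10, PhiEsk02]; try ring
      rw [he]; exact Submodule.neg_mem _ (hTmem _ (Esk_mem 0 2 (by decide) _ (hl 0)))

    · show glF l 11 ∈ (T : Set Rp)
      have he : glF l 11 = Phi0 l (Esk 0 1 (l 0)) := by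
        rw [glv11, PhiEsk01]; try ring
      rw [he]; exact hTmem _ (Esk_mem 0 1 (by decide) _ (hl 0))

    · show glF l 12 ∈ (T : Set Rp)
      have he : glF l 12 = -Phi0 l (Esk 1 4 (l 1)) := by
        rw [glv12, PhiEsk14]; try ring
      rw [he]; exact Submodule.neg_mem _ (hTmem _ (Esk_mem 1 4 (by decide) _ (hl 1)))

    · show glF l 13 ∈ (T : Set Rp)
      have he : glF l 13 = Phi0 l (Esk 0 4 (l 1)) := by
        rw [glv13, PhiEsk04]; try ring
      rw [he]; exact hTmem _ (Esk_mem 0 4 (by decide) _ (hl 1))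

    · show glF l 14 ∈ (T : Set Rp)
      have he : glF l 14 = -Phi0 l (Esk 1 4 (l 3)) := by
        rw [glv14, PhiEsk14]; try ring
      rw [he]; exact Submodule.neg_mem _ (hTmem _ (Esk_mem 1 4 (by decide) _ (hl 3)))

    · show glF l 15 ∈ (T : Set Rp)
      have he : glF l 15 = -Phi0 l (Esk 1 4 (l 4)) := by
        rw [glv15, PhiEsk14]; try ring
      rw [he]; exact Submodule.neg_mem _ (hTmem _ (Esk_mem 1 4 (by decide) _ (hl 4)))

    · show glF l 16 ∈ (T : Set Rp)
      have he : glF l 16 = -Phi0 l (Esk 0 3 (l 1)) := by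
        rw [glv16, PhiEsk03]; try ring
      rw [he]; exact Submodule.neg_mem _ (hTmem _ (Esk_mem 0 3 (by decide) _ (hl 1)))

    · show glF l 17 ∈ (T : Set Rp)
      have he : glF l 17 = -Phi0 l (Esk 0 2 (l 1)) := by
        rw [glv17, PhiEsk02]; try ring
      rw [he]; exact Submodule.neg_mem _ (hTmem _ (Esk_mem 0 2 (by decide) _ (hl 1)))

    · show glF l 18 ∈ (T : Set Rp)
      have he : glF l 18 = Phi0 l (Esk 0 1 (l 1)) := by
        rw [glv18, PhiEsk01]; try ring
      rw [he]; exact hTmem _ (Esk_mem 0 1 (by decide) _ (hl 1))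

    · show glF l 19 ∈ (T : Set Rp)
      have he : glF l 19 = -Phi0 l (Esk 0 3 (l 2)) := by
        rw [glv19, PhiEsk03]; try ring
      rw [he]; exact Submodule.neg_mem _ (hTmem _ (Esk_mem 0 3 (by decide) _ (hl 2)))

    · show glF l 20 ∈ (T : Set Rp)
      have he : glF l 20 = -Phi0 l (Esk 0 2 (l 2)) := by
        rw [glv20, PhiEsk02]; try ring
      rw [he]; exact Submodule.neg_mem _ (hTmem _ (Esk_mem 0 2 (by decide) _ (hl 2)))

    · show glF l 21 ∈ (T : Set Rp)
      have he : glF l 21 = Phi0 l (Esk 0 1 (l 2)) := by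
        rw [glv21, PhiEsk01]; try ring
      rw [he]; exact hTmem _ (Esk_mem 0 1 (by decide) _ (hl 2))

    · show glF l 22 ∈ (T : Set Rp)
      have he : glF l 22 = -Phi0 l (Esk 0 2 (l 3)) := by
        rw [glv22, PhiEsk02]; try ring
      rw [he]; exact Submodule.neg_mem _ (hTmem _ (Esk_mem 0 2 (by decide) _ (hl 3)))

    · show glF l 23 ∈ (T : Set Rp)
      have he : glF l 23 = Phi0 l (Esk 0 1 (l 3)) := by
        rw [glv23, PhiEsk01]; try ring
      rw [he]; exact hTmem _ (Esk_mem 0 1 (by decide) _ (hl 3))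

    · show glF l 24 ∈ (T : Set Rp)
      have he : glF l 24 = Phi0 l (Esk 0 1 (l 4)) := by
        rw [glv24, PhiEsk01]; try ring
      rw [he]; exact hTmem _ (Esk_mem 0 1 (by decide) _ (hl 4))

    · show glF l 25 ∈ (T : Set Rp)
      have he : glF l 25 = -Phi0 l (Esk 1 2 (l 3)) := by
        rw [glv25, PhiEsk12]; try ring
      rw [he]; exact Submodule.neg_mem _ (hTmem _ (Esk_mem 1 2 (by decide) _ (hl 3)))

    · show glF l 26 ∈ (T : Set Rp)
      have he : glF l 26 = -Phi0 l (Esk 1 2 (l 4)) := by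
        rw [glv26, PhiEsk12]; try ring
      rw [he]; exact Submodule.neg_mem _ (hTmem _ (Esk_mem 1 2 (by decide) _ (hl 4)))


end Tsd

open Tsd in
/-- Proposition 2.4 (Table 2), case (d). -/
theorem tangent_space_type_d
    (l : Fin 5 → Rp) (hl : ∀ i, (l i).IsHomogeneous 1) (hind : LinearIndependent ℂ l)
    (M : Matrix (Fin 6) (Fin 6) Rp)
    (hM : M = !![0, 0, 0, 0, l 0, l 1;
                 0, 0, 0, -l 0, 0, l 2;
                 0, 0, 0, -l 1, -l 2, 0;
                 0, l 0, l 1, 0, l 3, l 4;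
                 -l 0, 0, l 2, -l 3, 0, 0;
                 -l 1, -l 2, 0, -l 4, 0, 0]) :
    pf M = 0 ∧
    (∀ M' ∈ SkewLin, ∃! F : Rp, F.IsHomogeneous 3 ∧
      pf (jet1 M M') = DualNumber.eps * TrivSqZeroExt.inl F) ∧
    ∃ Φ : SkewLin →ₗ[ℂ] Cubics,
      (∀ M' : SkewLin,
        pf (jet1 M M'.1) = DualNumber.eps * TrivSqZeroExt.inl (Φ M' : Rp)) ∧
      Module.finrank ℂ (LinearMap.range Φ) = 27 := by
  have hMd : M = Md l := hM
  subst hMd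
  refine ⟨pf_Md l, ?_, ?_⟩
  · intro M' hM'
    refine ⟨Phi0 l M', ⟨Phi0_homog l hl M' hM'.2, key l M' hM'.1⟩, ?_⟩
    rintro y ⟨hy1, hy2⟩
    exact epsinl y (Phi0 l M') (hy2.symm.trans (key l M' hM'.1))
  · refine ⟨PhiL l hl, fun M' => key l M'.1 M'.2.1, ?_⟩
    have hli : LinearIndependent ℂ (glF l) := by
      have := g0_li.map' (aeval l : Rp →ₐ[ℂ] Rp).toLinearMap
        (LinearMap.ker_eq_bot.mpr (aeval_l_bijective l hl hind).1)
      exact this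
    rw [← Submodule.finrank_map_subtype_eq, range_eq l hl hind,
      finrank_span_eq_card hli]
    simp
end
end

section
/- Let l₀,…,l₄ be ℂ-linearly independent linear forms in R and let M be the 6×6 skew-symmetric matrix over R with rows (0, 0, 0, 0, l₀, l₁), (0, 0, 0, −l₀, 0, l₂), (0, 0, 0, −l₁, −l₂, 0), (0, l₀, l₁, 0, 0, 0), (−l₀, 0, l₂, 0, 0, 0), (−l₁, −l₂, 0, 0, 0, 0) (type (f)). Then Pf(M) = 0; for every 6×6 skew-symmetric matrix M′ all of whose entries are linear forms there is a unique cubic Φ(M′) ∈ R such that Pf(M + εM′) = ε·Φ(M′) in R[ε]/(ε²); the assignment M′ ↦ Φ(M′) is ℂ-linear from the ℂ-vector space of 6×6 skew-symmetric matrices of linear forms to the ℂ-vector space of cubics; and the ℂ-dimension of the range of Φ equals 22. -/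
open MvPolynomial Matrix

noncomputable section

/-! ### auxiliary lemmas -/

lemma pf_expand {A : Type*} [CommRing A] (N : Matrix (Fin 6) (Fin 6) A) :
    pf N =
      N 0 1 * (N 2 3 * N 4 5 - N 2 4 * N 3 5 + N 2 5 * N 3 4)
      - N 0 2 * (N 1 3 * N 4 5 - N 1 4 * N 3 5 + N 1 5 * N 3 4)
      + N 0 3 * (N 1 2 * N 4 5 - N 1 4 * N 2 5 + N 1 5 * N 2 4)
      - N 0 4 * (N 1 2 * N 3 5 - N 1 3 * N 2 5 + N 1 5 * N 2 3)
      + N 0 5 * (N 1 2 * N 3 4 - N 1 3 * N 2 4 + N 1 4 * N 2 3) := rfl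

/-- directional derivative of `pf` at `M` in direction `N` -/
def Dpf (M N : Matrix (Fin 6) (Fin 6) Rp) : Rp :=
      N 0 1 * (M 2 3 * M 4 5 - M 2 4 * M 3 5 + M 2 5 * M 3 4)
      - N 0 2 * (M 1 3 * M 4 5 - M 1 4 * M 3 5 + M 1 5 * M 3 4)
      + N 0 3 * (M 1 2 * M 4 5 - M 1 4 * M 2 5 + M 1 5 * M 2 4)
      - N 0 4 * (M 1 2 * M 3 5 - M 1 3 * M 2 5 + M 1 5 * M 2 3)
      + N 0 5 * (M 1 2 * M 3 4 - M 1 3 * M 2 4 + M 1 4 * M 2 3)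
      + M 0 1 * (N 2 3 * M 4 5 + M 2 3 * N 4 5 - N 2 4 * M 3 5 - M 2 4 * N 3 5 + N 2 5 * M 3 4 + M 2 5 * N 3 4)
      - M 0 2 * (N 1 3 * M 4 5 + M 1 3 * N 4 5 - N 1 4 * M 3 5 - M 1 4 * N 3 5 + N 1 5 * M 3 4 + M 1 5 * N 3 4)
      + M 0 3 * (N 1 2 * M 4 5 + M 1 2 * N 4 5 - N 1 4 * M 2 5 - M 1 4 * N 2 5 + N 1 5 * M 2 4 + M 1 5 * N 2 4)
      - M 0 4 * (N 1 2 * M 3 5 + M 1 2 * N 3 5 - N 1 3 * M 2 5 - M 1 3 * N 2 5 + N 1 5 * M 2 3 + M 1 5 * N 2 3)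
      + M 0 5 * (N 1 2 * M 3 4 + M 1 2 * N 3 4 - N 1 3 * M 2 4 - M 1 3 * N 2 4 + N 1 4 * M 2 3 + M 1 4 * N 2 3)

lemma jet1_apply (M N : Matrix (Fin 6) (Fin 6) Rp) (i j : Fin 6) :
    jet1 M N i j = TrivSqZeroExt.inl (M i j) + DualNumber.eps * TrivSqZeroExt.inl (N i j) := rfl

open TrivSqZeroExt in
set_option maxHeartbeats 1000000 in
lemma pf_jet (M N : Matrix (Fin 6) (Fin 6) Rp) :
    pf (jet1 M N) = inl (pf M) + DualNumber.eps * inl (Dpf M N) := by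
  rw [pf_expand, pf_expand, Dpf]
  simp only [jet1_apply]
  ext1
  · simp only [fst_add, fst_sub, fst_mul, fst_inl, snd_add, snd_sub, snd_mul, snd_inl,
      DualNumber.fst_eps, DualNumber.snd_eps, zero_mul, mul_zero, add_zero, zero_add,
      smul_zero, zero_smul, smul_eq_mul, MulOpposite.smul_eq_mul_unop, MulOpposite.unop_op]
  · simp only [fst_add, fst_sub, fst_mul, fst_inl, snd_add, snd_sub, snd_mul, snd_inl,
      DualNumber.fst_eps, DualNumber.snd_eps, zero_mul, mul_zero, add_zero, zero_add,
      smul_zero, zero_smul, smul_eq_mul, MulOpposite.smul_eq_mul_unop, MulOpposite.unop_op]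
    ring

lemma eps_inl_cancel {F G : Rp} (h : (DualNumber.eps : DualNumber Rp) * TrivSqZeroExt.inl F
    = DualNumber.eps * TrivSqZeroExt.inl G) : F = G := by
  have h2 := congrArg TrivSqZeroExt.snd h
  simpa [TrivSqZeroExt.snd_mul] using h2

/-! ### linear-forms machinery -/

lemma degree_one_classify (d : Fin 5 →₀ ℕ) (hd : Finsupp.degree d = 1) :
    ∃ i, d = Finsupp.single i 1 := by
  have h0 : d ≠ 0 := by
    rintro rfl
    simp [map_zero] at hd
  obtain ⟨i, hi⟩ : ∃ i, d i ≠ 0 := by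
    by_contra h
    push_neg at h
    exact h0 (Finsupp.ext fun a => h a)
  refine ⟨i, Finsupp.ext fun j => ?_⟩
  have h1 : d i ≤ 1 := hd ▸ Finsupp.le_degree i d
  by_cases hj : j = i
  · subst hj
    simp only [Finsupp.single_eq_same]
    omega
  · rw [Finsupp.single_eq_of_ne' (Ne.symm hj)]
    by_contra hdj
    have hij : i ≠ j := fun h => hj h.symm
    have hsub : ({i, j} : Finset (Fin 5)) ⊆ d.support := by
      intro x hx
      simp only [Finset.mem_insert, Finset.mem_singleton] at hx
      rcases hx with rfl | rfl <;> simp [Finsupp.mem_support_iff, hi, hdj]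
    have hle := Finset.sum_le_sum_of_subset (f := fun x => d x) hsub
    rw [Finset.sum_pair hij] at hle
    have hdeg : Finsupp.degree d = ∑ x ∈ d.support, d x := rfl
    rw [← hdeg, hd] at hle
    omega

lemma homog1_mem_spanX (p : Rp) (hp : p.IsHomogeneous 1) :
    p ∈ Submodule.span ℂ (Set.range (X : Fin 5 → Rp)) := by
  rw [p.as_sum]
  apply Submodule.sum_mem
  intro v hv
  have hw : Finsupp.degree v = 1 := by
    rw [Finsupp.degree_eq_weight_one]
    exact hp (MvPolynomial.mem_support_iff.1 hv)
  obtain ⟨i, rfl⟩ := degree_one_classify v hw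
  have : (monomial (Finsupp.single i 1)) (coeff (Finsupp.single i 1) p)
      = (coeff (Finsupp.single i 1) p) • X i := by
    rw [show (X i : Rp) = monomial (Finsupp.single i 1) 1 from rfl, smul_monomial,
      smul_eq_mul, mul_one]
  rw [this]
  exact Submodule.smul_mem _ _ (Submodule.subset_span ⟨i, rfl⟩)

lemma Xind : LinearIndependent ℂ (X : Fin 5 → Rp) := by
  have h : (X : Fin 5 → Rp) = fun i => (basisMonomials (Fin 5) ℂ) (Finsupp.single i 1) := rfl
  rw [h]
  exact (basisMonomials (Fin 5) ℂ).linearIndependent.comp _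
    (Finsupp.single_left_injective one_ne_zero)

section L

variable (l : Fin 5 → Rp)

/-- the span of the linear forms -/
def Wl : Submodule ℂ Rp := Submodule.span ℂ (Set.range l)

def WX : Submodule ℂ Rp := Submodule.span ℂ (Set.range (X : Fin 5 → Rp))

variable (hl : ∀ i, (l i).IsHomogeneous 1) (hind : LinearIndependent ℂ l)

include hl hind in
lemma Wl_eq_WX : Wl l = WX := by
  have hfin : FiniteDimensional ℂ WX := FiniteDimensional.span_of_finite ℂ (Set.finite_range _)
  have hle : Wl l ≤ WX := by
    rw [Wl, Submodule.span_le]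
    rintro x ⟨i, rfl⟩
    exact homog1_mem_spanX (l i) (hl i)
  refine Submodule.eq_of_le_of_finrank_le hle ?_
  rw [Wl, WX, finrank_span_eq_card hind, finrank_span_eq_card Xind]

include hl hind in
lemma aeval_l_injective : Function.Injective (aeval (R := ℂ) l) := by
  -- coefficient matrix
  have hA : ∀ i, ∃ c : Fin 5 → ℂ, ∑ j, c j • X j = l i := by
    intro i
    exact (Submodule.mem_span_range_iff_exists_fun ℂ).1 (homog1_mem_spanX (l i) (hl i))
  choose A hA using hA
  set Am : Matrix (Fin 5) (Fin 5) ℂ := Matrix.of A with hAm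
  -- rows of Am are linearly independent
  have hrows : LinearIndependent ℂ (fun i => Am i) := by
    have hL : l = fun i => (Fintype.linearCombination ℂ (X : Fin 5 → Rp)) (A i) := by
      funext i
      rw [Fintype.linearCombination_apply]
      exact (hA i).symm
    refine LinearIndependent.of_comp (Fintype.linearCombination ℂ (X : Fin 5 → Rp)) ?_
    have : (⇑(Fintype.linearCombination ℂ (X : Fin 5 → Rp)) ∘ fun i => Am i) = l := by
      funext i
      simp only [Function.comp_apply, hAm, Matrix.of_apply]
      rw [Fintype.linearCombination_apply]
      exact hA i
    rw [this]; exact hind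
  have hunit : IsUnit Am := linearIndependent_rows_iff_isUnit.1 hrows
  have hmulinv : Am * Am⁻¹ = 1 := Matrix.mul_nonsing_inv Am
    ((Matrix.isUnit_iff_isUnit_det Am).1 hunit)
  -- left inverse algebra morphism
  set ψ : Rp →ₐ[ℂ] Rp := aeval (fun j => ∑ k, (Am⁻¹ j k) • X k) with hψ
  have hψl : ∀ i, ψ (l i) = X i := by
    intro i
    rw [← hA i, map_sum]
    simp only [_root_.map_smul, aeval_X, hψ]
    have key : ∀ k, (∑ j, A i j * Am⁻¹ j k) = (1 : Matrix (Fin 5) (Fin 5) ℂ) i k := by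
      intro k
      rw [← hmulinv, Matrix.mul_apply]
      rfl
    calc ∑ j, A i j • ∑ k, (Am⁻¹ j k) • (X k : Rp)
        = ∑ j, ∑ k, (A i j * Am⁻¹ j k) • (X k : Rp) := by
          refine Finset.sum_congr rfl fun j _ => ?_
          rw [Finset.smul_sum]
          exact Finset.sum_congr rfl fun k _ => smul_smul _ _ _
      _ = ∑ k, ∑ j, (A i j * Am⁻¹ j k) • (X k : Rp) := Finset.sum_comm
      _ = ∑ k, (∑ j, A i j * Am⁻¹ j k) • (X k : Rp) := by
          exact Finset.sum_congr rfl fun k _ => (Finset.sum_smul).symm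
      _ = X i := by
          simp only [key, Matrix.one_apply, ite_smul, one_smul, zero_smul]
          simp
  have hcomp : ψ.comp (aeval l) = AlgHom.id ℂ Rp :=
    MvPolynomial.algHom_ext fun i => by simp [aeval_X, hψl i]
  intro p q h
  have h2 := congrArg ψ h
  rw [← AlgHom.comp_apply, ← AlgHom.comp_apply, hcomp, AlgHom.id_apply, AlgHom.id_apply] at h2
  exact h2

end L

/-! ### the 22 cubic monomials -/

def mX : Fin 22 → MvPolynomial (Fin 5) ℂ := fun k =>
  match k with
  | 0 => X 0 ^ 3 | 1 => X 0 ^ 2 * X 1 ^ 1 | 2 => X 0 ^ 2 * X 2 ^ 1 | 3 => X 0 ^ 2 * X 3 ^ 1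
  | 4 => X 0 ^ 2 * X 4 ^ 1 | 5 => X 1 ^ 2 * X 0 ^ 1 | 6 => X 1 ^ 3 | 7 => X 1 ^ 2 * X 2 ^ 1
  | 8 => X 1 ^ 2 * X 3 ^ 1 | 9 => X 1 ^ 2 * X 4 ^ 1 | 10 => X 2 ^ 2 * X 0 ^ 1
  | 11 => X 2 ^ 2 * X 1 ^ 1 | 12 => X 2 ^ 3 | 13 => X 2 ^ 2 * X 3 ^ 1 | 14 => X 2 ^ 2 * X 4 ^ 1
  | 15 => X 0 ^ 1 * X 1 ^ 1 * X 2 ^ 1 | 16 => X 0 ^ 1 * X 1 ^ 1 * X 3 ^ 1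
  | 17 => X 0 ^ 1 * X 1 ^ 1 * X 4 ^ 1 | 18 => X 0 ^ 1 * X 2 ^ 1 * X 3 ^ 1
  | 19 => X 0 ^ 1 * X 2 ^ 1 * X 4 ^ 1 | 20 => X 1 ^ 1 * X 2 ^ 1 * X 3 ^ 1
  | 21 => X 1 ^ 1 * X 2 ^ 1 * X 4 ^ 1
  | ⟨n+22, h⟩ => absurd h (by omega)

def dd : Fin 22 → (Fin 5 →₀ ℕ) := fun k =>
  match k with
  | 0 => Finsupp.single 0 3 | 1 => Finsupp.single 0 2 + Finsupp.single 1 1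
  | 2 => Finsupp.single 0 2 + Finsupp.single 2 1 | 3 => Finsupp.single 0 2 + Finsupp.single 3 1
  | 4 => Finsupp.single 0 2 + Finsupp.single 4 1 | 5 => Finsupp.single 1 2 + Finsupp.single 0 1
  | 6 => Finsupp.single 1 3 | 7 => Finsupp.single 1 2 + Finsupp.single 2 1
  | 8 => Finsupp.single 1 2 + Finsupp.single 3 1 | 9 => Finsupp.single 1 2 + Finsupp.single 4 1
  | 10 => Finsupp.single 2 2 + Finsupp.single 0 1 | 11 => Finsupp.single 2 2 + Finsupp.single 1 1
  | 12 => Finsupp.single 2 3 | 13 => Finsupp.single 2 2 + Finsupp.single 3 1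
  | 14 => Finsupp.single 2 2 + Finsupp.single 4 1
  | 15 => Finsupp.single 0 1 + Finsupp.single 1 1 + Finsupp.single 2 1
  | 16 => Finsupp.single 0 1 + Finsupp.single 1 1 + Finsupp.single 3 1
  | 17 => Finsupp.single 0 1 + Finsupp.single 1 1 + Finsupp.single 4 1
  | 18 => Finsupp.single 0 1 + Finsupp.single 2 1 + Finsupp.single 3 1
  | 19 => Finsupp.single 0 1 + Finsupp.single 2 1 + Finsupp.single 4 1
  | 20 => Finsupp.single 1 1 + Finsupp.single 2 1 + Finsupp.single 3 1
  | 21 => Finsupp.single 1 1 + Finsupp.single 2 1 + Finsupp.single 4 1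
  | ⟨n+22, h⟩ => absurd h (by omega)

def tt : Fin 22 → (Fin 5 → ℕ) := ![![3,0,0,0,0],![2,1,0,0,0],![2,0,1,0,0],![2,0,0,1,0],![2,0,0,0,1],
  ![1,2,0,0,0],![0,3,0,0,0],![0,2,1,0,0],![0,2,0,1,0],![0,2,0,0,1],
  ![1,0,2,0,0],![0,1,2,0,0],![0,0,3,0,0],![0,0,2,1,0],![0,0,2,0,1],
  ![1,1,1,0,0],![1,1,0,1,0],![1,1,0,0,1],![1,0,1,1,0],![1,0,1,0,1],![0,1,1,1,0],![0,1,1,0,1]]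

lemma dd_coe : (fun k => (dd k : Fin 5 → ℕ)) = tt := by
  funext k i
  fin_cases k <;> fin_cases i <;> simp [dd, Finsupp.single_apply] <;> decide

lemma dd_inj : Function.Injective dd := by
  have h2 : Function.Injective tt := by decide
  intro a b h
  exact h2 (by rw [← dd_coe]; simp only [h])

lemma mX_eq_monomial : mX = fun k => monomial (dd k) 1 := by
  funext k
  fin_cases k <;> simp only [mX, dd, X_pow_eq_monomial, monomial_mul, mul_one, one_mul]

lemma mX_ind : LinearIndependent ℂ mX := by
  rw [mX_eq_monomial]
  exact (basisMonomials (Fin 5) ℂ).linearIndependent.comp dd dd_inj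

section L2

variable (l : Fin 5 → Rp)

def uu : Fin 22 → Rp := fun k => aeval (R := ℂ) l (mX k)

/-- the candidate range of `Φ` -/
def SS : Submodule ℂ Rp := Submodule.span ℂ (Set.range (uu l))

variable (hl : ∀ i, (l i).IsHomogeneous 1) (hind : LinearIndependent ℂ l)

include hl hind in
lemma uu_ind : LinearIndependent ℂ (uu l) :=
  mX_ind.map' (aeval (R := ℂ) l).toLinearMap
    (LinearMap.ker_eq_bot.2 (aeval_l_injective l hl hind))

include hl hind in
lemma finrank_SS : Module.finrank ℂ (SS l) = 22 := by
  rw [SS, finrank_span_eq_card (uu_ind l hl hind)]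
  simp

end L2

/-! ### the derivative as a function of the direction -/

section L3

variable (l : Fin 5 → Rp)

def eFun (N : Matrix (Fin 6) (Fin 6) Rp) : Rp :=
  l 0 * l 1 * (N 1 5 + N 2 4) + l 1 * l 2 * (N 0 4 + N 1 3) - l 0 * l 2 * (N 2 3 + N 0 5)
    - l 0 ^ 2 * N 2 5 - l 1 ^ 2 * N 1 4 - l 2 ^ 2 * N 0 3

def Phiraw : Matrix (Fin 6) (Fin 6) Rp →ₗ[ℂ] Rp where
  toFun := eFun l
  map_add' := by
    intro a b
    simp only [eFun, Matrix.add_apply]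
    ring
  map_smul' := by
    intro c a
    simp only [eFun, Matrix.smul_apply, MvPolynomial.smul_eq_C_mul, RingHom.id_apply]
    ring

def Psi : SkewLin →ₗ[ℂ] Rp := (Phiraw l).comp (SkewLin.subtype)

lemma vec6_five {α : Type*} (a b c d e f : α) : ![a,b,c,d,e,f] (5 : Fin 6) = f := rfl

lemma Psi_apply (N : SkewLin) : Psi l N = eFun l N.1 := rfl

variable {M : Matrix (Fin 6) (Fin 6) Rp}

lemma pfM_eq_zero
    (hM : M = !![0, 0, 0, 0, l 0, l 1;
                 0, 0, 0, -l 0, 0, l 2;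
                 0, 0, 0, -l 1, -l 2, 0;
                 0, l 0, l 1, 0, 0, 0;
                 -l 0, 0, l 2, 0, 0, 0;
                 -l 1, -l 2, 0, 0, 0, 0]) : pf M = 0 := by
  subst hM
  rw [pf_expand]
  simp [Matrix.cons_val_succ, vec6_five]
  ring

lemma Dpf_eq_eFun
    (hM : M = !![0, 0, 0, 0, l 0, l 1;
                 0, 0, 0, -l 0, 0, l 2;
                 0, 0, 0, -l 1, -l 2, 0;
                 0, l 0, l 1, 0, 0, 0;
                 -l 0, 0, l 2, 0, 0, 0;
                 -l 1, -l 2, 0, 0, 0, 0])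
    (N : Matrix (Fin 6) (Fin 6) Rp) : Dpf M N = eFun l N := by
  subst hM
  rw [Dpf, eFun]
  simp [Matrix.cons_val_succ, vec6_five, Matrix.vecHead, Matrix.vecTail]
  ring

end L3

section L4

variable (l : Fin 5 → Rp) (hl : ∀ i, (l i).IsHomogeneous 1)

include hl in
lemma eFun_homog (N : Matrix (Fin 6) (Fin 6) Rp) (hN : ∀ i j, (N i j).IsHomogeneous 1) :
    (eFun l N).IsHomogeneous 3 := by
  rw [eFun]
  have h2 : ∀ a b : Fin 5, (l a * l b).IsHomogeneous 2 := fun a b => (hl a).mul (hl b)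
  have hp : ∀ a : Fin 5, ((l a) ^ 2).IsHomogeneous 2 := fun a => (hl a).pow 2
  have hs : ∀ i j i' j', ((N i j + N i' j').IsHomogeneous 1) :=
    fun i j i' j' => (hN i j).add (hN i' j')
  exact ((((((h2 0 1).mul (hs 1 5 2 4)).add ((h2 1 2).mul (hs 0 4 1 3))).sub
    ((h2 0 2).mul (hs 2 3 0 5))).sub ((hp 0).mul (hN 2 5))).sub
    ((hp 1).mul (hN 1 4))).sub ((hp 2).mul (hN 0 3))

def skewE (a b : Fin 6) (p : Rp) : Matrix (Fin 6) (Fin 6) Rp :=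
  Matrix.of fun i j => if i = a ∧ j = b then p else if i = b ∧ j = a then -p else 0

lemma skewE_mem {a b : Fin 6} (h : a ≠ b) {p : Rp} (hp : p.IsHomogeneous 1) :
    skewE a b p ∈ SkewLin := by
  constructor
  · ext i j : 1
    simp only [Matrix.transpose_apply, Matrix.neg_apply, skewE, Matrix.of_apply]
    split_ifs with h1 h2 <;> first
      | rfl
      | (exfalso; grind)
      | simp
  · intro i j
    simp only [skewE, Matrix.of_apply]
    split_ifs with h1 h2
    · exact hp
    · exact hp.neg
    · exact MvPolynomial.isHomogeneous_zero _ _ _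

end L4

section L5

variable (l : Fin 5 → Rp)

lemma eFun_skewE_25 (p : Rp) : eFun l (skewE 2 5 p) = -(l 0 ^ 2) * p := by
  simp [eFun, skewE]

lemma eFun_skewE_14 (p : Rp) : eFun l (skewE 1 4 p) = -(l 1 ^ 2) * p := by
  simp [eFun, skewE]

lemma eFun_skewE_03 (p : Rp) : eFun l (skewE 0 3 p) = -(l 2 ^ 2) * p := by
  simp [eFun, skewE]

lemma eFun_skewE_15 (p : Rp) : eFun l (skewE 1 5 p) = l 0 * l 1 * p := by
  simp [eFun, skewE]

lemma eFun_skewE_23 (p : Rp) : eFun l (skewE 2 3 p) = -(l 0 * l 2) * p := by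
  simp [eFun, skewE]

lemma eFun_skewE_04 (p : Rp) : eFun l (skewE 0 4 p) = l 1 * l 2 * p := by
  simp [eFun, skewE]

end L5

section L6

variable (l : Fin 5 → Rp) (hl : ∀ i, (l i).IsHomogeneous 1) (hind : LinearIndependent ℂ l)

include hl in
set_option maxHeartbeats 4000000 in
lemma SS_le_range : SS l ≤ LinearMap.range (Psi l) := by
  rw [SS, Submodule.span_le]
  rintro x ⟨k, rfl⟩
  fin_cases k
  all_goals simp only [uu, mX]
  · refine ⟨⟨skewE 2 5 (-(l 0)), skewE_mem (by decide) ((hl 0).neg)⟩, ?_⟩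
    show eFun l (skewE 2 5 (-(l 0))) = _
    rw [eFun_skewE_25]
    simp only [_root_.map_pow, _root_.map_mul, aeval_X]
    ring
  · refine ⟨⟨skewE 2 5 (-(l 1)), skewE_mem (by decide) ((hl 1).neg)⟩, ?_⟩
    show eFun l (skewE 2 5 (-(l 1))) = _
    rw [eFun_skewE_25]
    simp only [_root_.map_pow, _root_.map_mul, aeval_X]
    ring
  · refine ⟨⟨skewE 2 5 (-(l 2)), skewE_mem (by decide) ((hl 2).neg)⟩, ?_⟩
    show eFun l (skewE 2 5 (-(l 2))) = _
    rw [eFun_skewE_25]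
    simp only [_root_.map_pow, _root_.map_mul, aeval_X]
    ring
  · refine ⟨⟨skewE 2 5 (-(l 3)), skewE_mem (by decide) ((hl 3).neg)⟩, ?_⟩
    show eFun l (skewE 2 5 (-(l 3))) = _
    rw [eFun_skewE_25]
    simp only [_root_.map_pow, _root_.map_mul, aeval_X]
    ring
  · refine ⟨⟨skewE 2 5 (-(l 4)), skewE_mem (by decide) ((hl 4).neg)⟩, ?_⟩
    show eFun l (skewE 2 5 (-(l 4))) = _
    rw [eFun_skewE_25]
    simp only [_root_.map_pow, _root_.map_mul, aeval_X]
    ring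
  · refine ⟨⟨skewE 1 4 (-(l 0)), skewE_mem (by decide) ((hl 0).neg)⟩, ?_⟩
    show eFun l (skewE 1 4 (-(l 0))) = _
    rw [eFun_skewE_14]
    simp only [_root_.map_pow, _root_.map_mul, aeval_X]
    ring
  · refine ⟨⟨skewE 1 4 (-(l 1)), skewE_mem (by decide) ((hl 1).neg)⟩, ?_⟩
    show eFun l (skewE 1 4 (-(l 1))) = _
    rw [eFun_skewE_14]
    simp only [_root_.map_pow, _root_.map_mul, aeval_X]
    ring
  · refine ⟨⟨skewE 1 4 (-(l 2)), skewE_mem (by decide) ((hl 2).neg)⟩, ?_⟩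
    show eFun l (skewE 1 4 (-(l 2))) = _
    rw [eFun_skewE_14]
    simp only [_root_.map_pow, _root_.map_mul, aeval_X]
    ring
  · refine ⟨⟨skewE 1 4 (-(l 3)), skewE_mem (by decide) ((hl 3).neg)⟩, ?_⟩
    show eFun l (skewE 1 4 (-(l 3))) = _
    rw [eFun_skewE_14]
    simp only [_root_.map_pow, _root_.map_mul, aeval_X]
    ring
  · refine ⟨⟨skewE 1 4 (-(l 4)), skewE_mem (by decide) ((hl 4).neg)⟩, ?_⟩
    show eFun l (skewE 1 4 (-(l 4))) = _
    rw [eFun_skewE_14]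
    simp only [_root_.map_pow, _root_.map_mul, aeval_X]
    ring
  · refine ⟨⟨skewE 0 3 (-(l 0)), skewE_mem (by decide) ((hl 0).neg)⟩, ?_⟩
    show eFun l (skewE 0 3 (-(l 0))) = _
    rw [eFun_skewE_03]
    simp only [_root_.map_pow, _root_.map_mul, aeval_X]
    ring
  · refine ⟨⟨skewE 0 3 (-(l 1)), skewE_mem (by decide) ((hl 1).neg)⟩, ?_⟩
    show eFun l (skewE 0 3 (-(l 1))) = _
    rw [eFun_skewE_03]
    simp only [_root_.map_pow, _root_.map_mul, aeval_X]
    ring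
  · refine ⟨⟨skewE 0 3 (-(l 2)), skewE_mem (by decide) ((hl 2).neg)⟩, ?_⟩
    show eFun l (skewE 0 3 (-(l 2))) = _
    rw [eFun_skewE_03]
    simp only [_root_.map_pow, _root_.map_mul, aeval_X]
    ring
  · refine ⟨⟨skewE 0 3 (-(l 3)), skewE_mem (by decide) ((hl 3).neg)⟩, ?_⟩
    show eFun l (skewE 0 3 (-(l 3))) = _
    rw [eFun_skewE_03]
    simp only [_root_.map_pow, _root_.map_mul, aeval_X]
    ring
  · refine ⟨⟨skewE 0 3 (-(l 4)), skewE_mem (by decide) ((hl 4).neg)⟩, ?_⟩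
    show eFun l (skewE 0 3 (-(l 4))) = _
    rw [eFun_skewE_03]
    simp only [_root_.map_pow, _root_.map_mul, aeval_X]
    ring
  · refine ⟨⟨skewE 1 5 (l 2), skewE_mem (by decide) (hl 2)⟩, ?_⟩
    show eFun l (skewE 1 5 (l 2)) = _
    rw [eFun_skewE_15]
    simp only [_root_.map_pow, _root_.map_mul, aeval_X]
    ring
  · refine ⟨⟨skewE 1 5 (l 3), skewE_mem (by decide) (hl 3)⟩, ?_⟩
    show eFun l (skewE 1 5 (l 3)) = _
    rw [eFun_skewE_15]
    simp only [_root_.map_pow, _root_.map_mul, aeval_X]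
    ring
  · refine ⟨⟨skewE 1 5 (l 4), skewE_mem (by decide) (hl 4)⟩, ?_⟩
    show eFun l (skewE 1 5 (l 4)) = _
    rw [eFun_skewE_15]
    simp only [_root_.map_pow, _root_.map_mul, aeval_X]
    ring
  · refine ⟨⟨skewE 2 3 (-(l 3)), skewE_mem (by decide) ((hl 3).neg)⟩, ?_⟩
    show eFun l (skewE 2 3 (-(l 3))) = _
    rw [eFun_skewE_23]
    simp only [_root_.map_pow, _root_.map_mul, aeval_X]
    ring
  · refine ⟨⟨skewE 2 3 (-(l 4)), skewE_mem (by decide) ((hl 4).neg)⟩, ?_⟩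
    show eFun l (skewE 2 3 (-(l 4))) = _
    rw [eFun_skewE_23]
    simp only [_root_.map_pow, _root_.map_mul, aeval_X]
    ring
  · refine ⟨⟨skewE 0 4 (l 3), skewE_mem (by decide) (hl 3)⟩, ?_⟩
    show eFun l (skewE 0 4 (l 3)) = _
    rw [eFun_skewE_04]
    simp only [_root_.map_pow, _root_.map_mul, aeval_X]
    ring
  · refine ⟨⟨skewE 0 4 (l 4), skewE_mem (by decide) (hl 4)⟩, ?_⟩
    show eFun l (skewE 0 4 (l 4)) = _
    rw [eFun_skewE_04]
    simp only [_root_.map_pow, _root_.map_mul, aeval_X]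
    ring

include hl hind in
set_option maxHeartbeats 4000000 in
lemma range_le_SS : LinearMap.range (Psi l) ≤ SS l := by
  rintro x ⟨⟨N, hNs, hNh⟩, rfl⟩
  have hent : ∀ i j, N i j ∈ Wl l := fun i j => by
    rw [Wl_eq_WX l hl hind]; exact homog1_mem_spanX _ (hNh i j)
  have mulq : ∀ q : Rp, (∀ t, q * l t ∈ SS l) → ∀ p, p ∈ Wl l → q * p ∈ SS l := by
    intro q hq p hp
    refine Submodule.span_induction (p := fun x _ => q * x ∈ SS l) ?_ ?_ ?_ ?_ hp
    · rintro x ⟨t, rfl⟩; exact hq t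
    · simp
    · intro x y _ _ hx hy; rw [mul_add]; exact add_mem hx hy
    · intro c x _ hx; rw [mul_smul_comm]; exact Submodule.smul_mem _ _ hx
  have hqA : ∀ t : Fin 5, (l 0 ^ 2) * l t ∈ SS l := by
    have h0 : (l 0 ^ 2) * l 0 ∈ SS l :=
      Submodule.subset_span ⟨0, by simp only [uu, mX, _root_.map_pow, _root_.map_mul, aeval_X]; ring⟩
    have h1 : (l 0 ^ 2) * l 1 ∈ SS l :=
      Submodule.subset_span ⟨1, by simp only [uu, mX, _root_.map_pow, _root_.map_mul, aeval_X]; ring⟩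
    have h2 : (l 0 ^ 2) * l 2 ∈ SS l :=
      Submodule.subset_span ⟨2, by simp only [uu, mX, _root_.map_pow, _root_.map_mul, aeval_X]; ring⟩
    have h3 : (l 0 ^ 2) * l 3 ∈ SS l :=
      Submodule.subset_span ⟨3, by simp only [uu, mX, _root_.map_pow, _root_.map_mul, aeval_X]; ring⟩
    have h4 : (l 0 ^ 2) * l 4 ∈ SS l :=
      Submodule.subset_span ⟨4, by simp only [uu, mX, _root_.map_pow, _root_.map_mul, aeval_X]; ring⟩
    intro t
    fin_cases t
    exacts [h0, h1, h2, h3, h4]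
  have hqB : ∀ t : Fin 5, (l 1 ^ 2) * l t ∈ SS l := by
    have h0 : (l 1 ^ 2) * l 0 ∈ SS l :=
      Submodule.subset_span ⟨5, by simp only [uu, mX, _root_.map_pow, _root_.map_mul, aeval_X]; ring⟩
    have h1 : (l 1 ^ 2) * l 1 ∈ SS l :=
      Submodule.subset_span ⟨6, by simp only [uu, mX, _root_.map_pow, _root_.map_mul, aeval_X]; ring⟩
    have h2 : (l 1 ^ 2) * l 2 ∈ SS l :=
      Submodule.subset_span ⟨7, by simp only [uu, mX, _root_.map_pow, _root_.map_mul, aeval_X]; ring⟩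
    have h3 : (l 1 ^ 2) * l 3 ∈ SS l :=
      Submodule.subset_span ⟨8, by simp only [uu, mX, _root_.map_pow, _root_.map_mul, aeval_X]; ring⟩
    have h4 : (l 1 ^ 2) * l 4 ∈ SS l :=
      Submodule.subset_span ⟨9, by simp only [uu, mX, _root_.map_pow, _root_.map_mul, aeval_X]; ring⟩
    intro t
    fin_cases t
    exacts [h0, h1, h2, h3, h4]
  have hqC : ∀ t : Fin 5, (l 2 ^ 2) * l t ∈ SS l := by
    have h0 : (l 2 ^ 2) * l 0 ∈ SS l :=
      Submodule.subset_span ⟨10, by simp only [uu, mX, _root_.map_pow, _root_.map_mul, aeval_X]; ring⟩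
    have h1 : (l 2 ^ 2) * l 1 ∈ SS l :=
      Submodule.subset_span ⟨11, by simp only [uu, mX, _root_.map_pow, _root_.map_mul, aeval_X]; ring⟩
    have h2 : (l 2 ^ 2) * l 2 ∈ SS l :=
      Submodule.subset_span ⟨12, by simp only [uu, mX, _root_.map_pow, _root_.map_mul, aeval_X]; ring⟩
    have h3 : (l 2 ^ 2) * l 3 ∈ SS l :=
      Submodule.subset_span ⟨13, by simp only [uu, mX, _root_.map_pow, _root_.map_mul, aeval_X]; ring⟩
    have h4 : (l 2 ^ 2) * l 4 ∈ SS l :=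
      Submodule.subset_span ⟨14, by simp only [uu, mX, _root_.map_pow, _root_.map_mul, aeval_X]; ring⟩
    intro t
    fin_cases t
    exacts [h0, h1, h2, h3, h4]
  have hqD : ∀ t : Fin 5, (l 0 * l 1) * l t ∈ SS l := by
    have h0 : (l 0 * l 1) * l 0 ∈ SS l :=
      Submodule.subset_span ⟨1, by simp only [uu, mX, _root_.map_pow, _root_.map_mul, aeval_X]; ring⟩
    have h1 : (l 0 * l 1) * l 1 ∈ SS l :=
      Submodule.subset_span ⟨5, by simp only [uu, mX, _root_.map_pow, _root_.map_mul, aeval_X]; ring⟩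
    have h2 : (l 0 * l 1) * l 2 ∈ SS l :=
      Submodule.subset_span ⟨15, by simp only [uu, mX, _root_.map_pow, _root_.map_mul, aeval_X]; ring⟩
    have h3 : (l 0 * l 1) * l 3 ∈ SS l :=
      Submodule.subset_span ⟨16, by simp only [uu, mX, _root_.map_pow, _root_.map_mul, aeval_X]; ring⟩
    have h4 : (l 0 * l 1) * l 4 ∈ SS l :=
      Submodule.subset_span ⟨17, by simp only [uu, mX, _root_.map_pow, _root_.map_mul, aeval_X]; ring⟩
    intro t
    fin_cases t
    exacts [h0, h1, h2, h3, h4]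
  have hqE : ∀ t : Fin 5, (l 0 * l 2) * l t ∈ SS l := by
    have h0 : (l 0 * l 2) * l 0 ∈ SS l :=
      Submodule.subset_span ⟨2, by simp only [uu, mX, _root_.map_pow, _root_.map_mul, aeval_X]; ring⟩
    have h1 : (l 0 * l 2) * l 1 ∈ SS l :=
      Submodule.subset_span ⟨15, by simp only [uu, mX, _root_.map_pow, _root_.map_mul, aeval_X]; ring⟩
    have h2 : (l 0 * l 2) * l 2 ∈ SS l :=
      Submodule.subset_span ⟨10, by simp only [uu, mX, _root_.map_pow, _root_.map_mul, aeval_X]; ring⟩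
    have h3 : (l 0 * l 2) * l 3 ∈ SS l :=
      Submodule.subset_span ⟨18, by simp only [uu, mX, _root_.map_pow, _root_.map_mul, aeval_X]; ring⟩
    have h4 : (l 0 * l 2) * l 4 ∈ SS l :=
      Submodule.subset_span ⟨19, by simp only [uu, mX, _root_.map_pow, _root_.map_mul, aeval_X]; ring⟩
    intro t
    fin_cases t
    exacts [h0, h1, h2, h3, h4]
  have hqF : ∀ t : Fin 5, (l 1 * l 2) * l t ∈ SS l := by
    have h0 : (l 1 * l 2) * l 0 ∈ SS l :=
      Submodule.subset_span ⟨15, by simp only [uu, mX, _root_.map_pow, _root_.map_mul, aeval_X]; ring⟩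
    have h1 : (l 1 * l 2) * l 1 ∈ SS l :=
      Submodule.subset_span ⟨7, by simp only [uu, mX, _root_.map_pow, _root_.map_mul, aeval_X]; ring⟩
    have h2 : (l 1 * l 2) * l 2 ∈ SS l :=
      Submodule.subset_span ⟨11, by simp only [uu, mX, _root_.map_pow, _root_.map_mul, aeval_X]; ring⟩
    have h3 : (l 1 * l 2) * l 3 ∈ SS l :=
      Submodule.subset_span ⟨20, by simp only [uu, mX, _root_.map_pow, _root_.map_mul, aeval_X]; ring⟩
    have h4 : (l 1 * l 2) * l 4 ∈ SS l :=
      Submodule.subset_span ⟨21, by simp only [uu, mX, _root_.map_pow, _root_.map_mul, aeval_X]; ring⟩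
    intro t
    fin_cases t
    exacts [h0, h1, h2, h3, h4]
  show eFun l N ∈ SS l
  rw [eFun]
  exact sub_mem (sub_mem (sub_mem (sub_mem (add_mem
    (mulq (l 0 * l 1) hqD _ (add_mem (hent 1 5) (hent 2 4)))
    (mulq (l 1 * l 2) hqF _ (add_mem (hent 0 4) (hent 1 3))))
    (mulq (l 0 * l 2) hqE _ (add_mem (hent 2 3) (hent 0 5))))
    (mulq (l 0 ^ 2) hqA _ (hent 2 5)))
    (mulq (l 1 ^ 2) hqB _ (hent 1 4)))
    (mulq (l 2 ^ 2) hqC _ (hent 0 3))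

include hl hind in
lemma range_Psi_eq : LinearMap.range (Psi l) = SS l :=
  le_antisymm (range_le_SS l hl hind) (SS_le_range l hl)

end L6

set_option synthInstance.maxHeartbeats 1000000 in
set_option maxHeartbeats 1000000 in
/-- Proposition 2.4 (Table 2), case (f). -/
theorem tangent_space_type_f
    (l : Fin 5 → Rp) (hl : ∀ i, (l i).IsHomogeneous 1) (hind : LinearIndependent ℂ l)
    (M : Matrix (Fin 6) (Fin 6) Rp)
    (hM : M = !![0, 0, 0, 0, l 0, l 1;
                 0, 0, 0, -l 0, 0, l 2;
                 0, 0, 0, -l 1, -l 2, 0;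
                 0, l 0, l 1, 0, 0, 0;
                 -l 0, 0, l 2, 0, 0, 0;
                 -l 1, -l 2, 0, 0, 0, 0]) :
    pf M = 0 ∧
    (∀ M' ∈ SkewLin, ∃! F : Rp, F.IsHomogeneous 3 ∧
      pf (jet1 M M') = DualNumber.eps * TrivSqZeroExt.inl F) ∧
    ∃ Φ : SkewLin →ₗ[ℂ] Cubics,
      (∀ M' : SkewLin,
        pf (jet1 M M'.1) = DualNumber.eps * TrivSqZeroExt.inl (Φ M' : Rp)) ∧
      Module.finrank ℂ (LinearMap.range Φ) = 22 := by
  have hpf0 : pf M = 0 := pfM_eq_zero l hM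
  have key : ∀ N, pf (jet1 M N) = DualNumber.eps * TrivSqZeroExt.inl (eFun l N) := by
    intro N
    rw [pf_jet, hpf0, Dpf_eq_eFun l hM, TrivSqZeroExt.inl_zero, zero_add]
  refine ⟨hpf0, ?_, ?_⟩
  · intro M' hM'
    refine ⟨eFun l M', ⟨eFun_homog l hl M' hM'.2, key M'⟩, ?_⟩
    rintro G ⟨hG1, hG2⟩
    exact eps_inl_cancel (hG2.symm.trans (key M'))
  · have hcod : ∀ M' : SkewLin, Psi l M' ∈ Cubics :=
      fun M' => (mem_homogeneousSubmodule _ _).2 (eFun_homog l hl M'.1 M'.2.2)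
    refine ⟨LinearMap.codRestrict Cubics (Psi l) hcod, fun M' => by rw [key M'.1]; rfl, ?_⟩
    have heq : Module.finrank ℂ ↥(LinearMap.range (LinearMap.codRestrict Cubics (Psi l) hcod))
        = Module.finrank ℂ ↥(Submodule.map Cubics.subtype
            (LinearMap.range (LinearMap.codRestrict Cubics (Psi l) hcod))) :=
      LinearEquiv.finrank_eq (Submodule.equivMapOfInjective _ (Submodule.injective_subtype _) _)
    rw [heq, ← LinearMap.range_comp, LinearMap.subtype_comp_codRestrict,
      range_Psi_eq l hl hind, finrank_SS l hl hind]
end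
end

section
/- Let n ≥ 1 and let I be an ideal of the polynomial ring ℂ[y₁,…,yₙ] such that every element of I vanishes at the origin. Let J ⊆ ℂ[y₁,…,yₙ] be the ideal generated by the initial forms in(f) of all nonzero f ∈ I, and let p′ ∈ ℂⁿ. Then every homogeneous element of J of degree at most 2 vanishes at p′ if and only if there exists p″ ∈ ℂⁿ such that for every f ∈ I, the image of f under the substitution yᵢ ↦ ε·p′ᵢ + ε²·p″ᵢ is zero in ℂ[ε]/(ε³). -/
open MvPolynomial Polynomial

noncomputable section

/-- The ring `ℂ[ε]/(ε³)`. -/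
abbrev Ceps3 : Type := Polynomial ℂ ⧸ Ideal.span {(Polynomial.X : Polynomial ℂ) ^ 3}


lemma finsupp_degree_one {n : ℕ} {m : Fin n →₀ ℕ} (h : m.degree = 1) :
    ∃ i, m = Finsupp.single i 1 := by
  have hm : m ≠ 0 := by
    intro h0; rw [h0] at h; simp [map_zero] at h
  obtain ⟨i, hi⟩ := Finsupp.support_nonempty_iff.mpr hm
  have h1 : 1 ≤ m i := Nat.one_le_iff_ne_zero.mpr (Finsupp.mem_support_iff.mp hi)
  have h2 : m i ≤ 1 := h ▸ Finsupp.le_degree i m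
  have hmi : m i = 1 := le_antisymm h2 h1
  refine ⟨i, ?_⟩
  have hsupp : m.support = {i} := by
    apply Finset.eq_singleton_iff_unique_mem.mpr
    refine ⟨hi, fun j hj => ?_⟩
    by_contra hji
    have hj1 : 1 ≤ m j := Nat.one_le_iff_ne_zero.mpr (Finsupp.mem_support_iff.mp hj)
    have : 2 ≤ m.degree := by
      rw [Finsupp.degree_apply]
      calc 2 ≤ m i + m j := by omega
        _ ≤ ∑ k ∈ m.support, m k := by
            rw [← Finset.sum_pair (fun hij => hji (hij.symm))]
            exact Finset.sum_le_sum_of_subset (by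
              intro k hk
              simp only [Finset.mem_insert, Finset.mem_singleton] at hk
              rcases hk with rfl | rfl
              exacts [hi, hj])
    omega
  have := (Finsupp.support_eq_singleton.mp hsupp).2
  rwa [hmi] at this

variable {n : ℕ} (p' p'' : Fin n → ℂ)

/-- The substitution values. -/
def subs (p' p'' : Fin n → ℂ) : Fin n → Polynomial ℂ :=
  fun i => Polynomial.C (p' i) * Polynomial.X + Polynomial.C (p'' i) * Polynomial.X ^ 2

lemma aeval_subs_monomial (m : Fin n →₀ ℕ) (c : ℂ) :
    MvPolynomial.aeval (subs p' p'') (monomial m c) =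
      Polynomial.C c * (Polynomial.X ^ m.degree *
        (m.prod fun i e => (Polynomial.C (p' i) + Polynomial.C (p'' i) * Polynomial.X) ^ e)) := by
  rw [MvPolynomial.aeval_monomial, Polynomial.algebraMap_eq]
  rw [Finsupp.prod, Finsupp.prod, Finsupp.degree_apply, ← Finset.prod_pow_eq_pow_sum,
    ← Finset.prod_mul_distrib]
  congr 1
  apply Finset.prod_congr rfl
  intro i _
  rw [← mul_pow]
  congr 1
  unfold subs
  ring

lemma coeff_aeval_subs_monomial (m : Fin n →₀ ℕ) (c : ℂ) (k : ℕ) :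
    Polynomial.coeff (MvPolynomial.aeval (subs p' p'') (monomial m c)) k =
      if m.degree ≤ k then
        c * Polynomial.coeff
          (m.prod fun i e => (Polynomial.C (p' i) + Polynomial.C (p'' i) * Polynomial.X) ^ e)
          (k - m.degree)
      else 0 := by
  rw [aeval_subs_monomial, Polynomial.coeff_C_mul, Polynomial.coeff_X_pow_mul']
  split_ifs <;> simp

lemma coeffZeroProdSubs (m : Fin n →₀ ℕ) :
    Polynomial.coeff
      (m.prod fun i e => (Polynomial.C (p' i) + Polynomial.C (p'' i) * Polynomial.X) ^ e) 0 =
      m.prod fun i e => (p' i) ^ e := by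
  rw [Polynomial.coeff_zero_eq_eval_zero, Finsupp.prod, Finsupp.prod]
  rw [Polynomial.eval_prod]
  apply Finset.prod_congr rfl
  intro i _
  simp

lemma hc_monomial (d : ℕ) (m : Fin n →₀ ℕ) (c : ℂ) :
    homogeneousComponent d (monomial m c) = if d = m.degree then monomial m c else 0 :=
  homogeneousComponent_of_mem
    ((mem_homogeneousSubmodule _ _).mpr (isHomogeneous_monomial c rfl))

lemma coeff_zero_aeval_subs (f : MvPolynomial (Fin n) ℂ) :
    (MvPolynomial.aeval (subs p' p'') f).coeff 0 = constantCoeff f := by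
  induction f using MvPolynomial.induction_on' with
  | monomial m c =>
    rcases Nat.eq_zero_or_pos m.degree with h | h
    · have hm : m = 0 := (Finsupp.degree_eq_zero_iff m).mp h
      subst hm
      simp [coeff_aeval_subs_monomial, constantCoeff_monomial]
    · rw [coeff_aeval_subs_monomial, if_neg (by omega), constantCoeff_monomial, if_neg]
      intro h0
      subst h0
      simp at h
  | add p q hp hq => rw [map_add, Polynomial.coeff_add, hp, hq, map_add]

lemma coeff_one_aeval_subs (f : MvPolynomial (Fin n) ℂ) :
    (MvPolynomial.aeval (subs p' p'') f).coeff 1 =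
      MvPolynomial.eval p' (homogeneousComponent 1 f) := by
  induction f using MvPolynomial.induction_on' with
  | monomial m c =>
    rw [coeff_aeval_subs_monomial, hc_monomial]
    by_cases h1 : m.degree = 1
    · rw [if_pos (by omega), if_pos h1.symm, h1, Nat.sub_self, coeffZeroProdSubs,
        MvPolynomial.eval_monomial]
    · rcases Nat.eq_zero_or_pos m.degree with h0 | h0
      · have hm : m = 0 := (Finsupp.degree_eq_zero_iff m).mp h0
        subst hm
        simp [Finsupp.prod_zero_index, Polynomial.coeff_one]
      · rw [if_neg (by omega), if_neg (by omega), map_zero]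
  | add p q hp hq => rw [map_add, Polynomial.coeff_add, hp, hq, map_add, map_add]

lemma coeff_two_aeval_subs (f : MvPolynomial (Fin n) ℂ) :
    (MvPolynomial.aeval (subs p' p'') f).coeff 2 =
      MvPolynomial.eval p' (homogeneousComponent 2 f) +
        MvPolynomial.eval p'' (homogeneousComponent 1 f) := by
  induction f using MvPolynomial.induction_on' with
  | monomial m c =>
    rw [coeff_aeval_subs_monomial, hc_monomial, hc_monomial]
    by_cases h2 : m.degree = 2
    · rw [if_pos (by omega), if_pos h2.symm, if_neg (by omega), h2, map_zero,
        coeffZeroProdSubs, MvPolynomial.eval_monomial, add_zero]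
    · by_cases h1 : m.degree = 1
      · obtain ⟨i, rfl⟩ := finsupp_degree_one h1
        rw [if_pos (by omega), if_neg (by omega), if_pos h1.symm, h1, map_zero, zero_add,
          MvPolynomial.eval_monomial]
        rw [Finsupp.prod_single_index (by simp), Finsupp.prod_single_index (by simp)]
        simp
      · rcases Nat.eq_zero_or_pos m.degree with h0 | h0
        · have hm : m = 0 := (Finsupp.degree_eq_zero_iff m).mp h0
          subst hm
          simp [Finsupp.prod_zero_index, Polynomial.coeff_one]
        · rw [if_neg (by omega), if_neg (by omega), if_neg (by omega), map_zero, map_zero,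
            add_zero]
  | add p q hp hq =>
    rw [map_add, Polynomial.coeff_add, hp, hq, map_add, map_add, map_add, map_add]
    ring

lemma hc_one_eq_sum (f : MvPolynomial (Fin n) ℂ) :
    homogeneousComponent 1 f =
      ∑ i : Fin n, monomial (Finsupp.single i 1) (coeff (Finsupp.single i 1) f) := by
  apply MvPolynomial.ext
  intro m
  rw [coeff_homogeneousComponent]
  rw [MvPolynomial.coeff_sum]
  simp_rw [MvPolynomial.coeff_monomial]
  by_cases h : m.degree = 1
  · obtain ⟨i, rfl⟩ := finsupp_degree_one h
    rw [if_pos h, Finset.sum_eq_single i]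
    · rw [if_pos rfl]
    · intro j _ hji
      exact if_neg (fun hh => hji ((Finsupp.single_left_inj one_ne_zero).mp hh))
    · intro hh
      exact absurd (Finset.mem_univ i) hh
  · rw [if_neg h]
    symm
    apply Finset.sum_eq_zero
    intro j _
    apply if_neg
    intro hh
    apply h
    rw [← hh]
    rw [Finsupp.degree_apply, Finsupp.support_single_ne_zero _ one_ne_zero, Finset.sum_singleton,
      Finsupp.single_eq_same]

lemma eval_hc_one (q : Fin n → ℂ) (f : MvPolynomial (Fin n) ℂ) :
    MvPolynomial.eval q (homogeneousComponent 1 f) =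
      ∑ i : Fin n, coeff (Finsupp.single i 1) f * q i := by
  rw [hc_one_eq_sum, map_sum]
  apply Finset.sum_congr rfl
  intro i _
  rw [MvPolynomial.eval_monomial, Finsupp.prod_single_index (by simp), pow_one]

lemma hc_mul_homog (d e : ℕ) (s : MvPolynomial (Fin n) ℂ) (hs : s.IsHomogeneous e)
    (r : MvPolynomial (Fin n) ℂ) :
    homogeneousComponent d (r * s) =
      if e ≤ d then homogeneousComponent (d - e) r * s else 0 := by
  induction r using MvPolynomial.induction_on' with
  | monomial m c =>
    have hmem : (monomial m c * s).IsHomogeneous (m.degree + e) :=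
      (isHomogeneous_monomial c rfl).mul hs
    rw [homogeneousComponent_of_mem ((mem_homogeneousSubmodule _ _).mpr hmem), hc_monomial]
    by_cases he : e ≤ d
    · rw [if_pos he]
      by_cases hd : d = m.degree + e
      · rw [if_pos hd, if_pos (by omega)]
      · rw [if_neg hd, if_neg (by omega), zero_mul]
    · rw [if_neg he, if_neg (by omega)]
  | add p q hp hq =>
    rw [add_mul, map_add, hp, hq, map_add, add_mul]
    split_ifs
    · rfl
    · rw [add_zero]

/-- Evaluation at `p'` composed with degree-2 homogeneous component, as a linear map. -/
def q2 (p' : Fin n → ℂ) : MvPolynomial (Fin n) ℂ →ₗ[ℂ] ℂ where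
  toFun f := MvPolynomial.eval p' (homogeneousComponent 2 f)
  map_add' f g := by simp
  map_smul' c f := by simp [MvPolynomial.smul_eval]

/-- The vector of degree-1 coefficients, as a linear map. -/
def cv : MvPolynomial (Fin n) ℂ →ₗ[ℂ] (Fin n → ℂ) :=
  LinearMap.pi fun i => MvPolynomial.lcoeff ℂ (Finsupp.single i 1)

lemma cv_apply (f : MvPolynomial (Fin n) ℂ) (i : Fin n) :
    cv f i = coeff (Finsupp.single i 1) f := rfl

lemma quot_zero_iff (f : MvPolynomial (Fin n) ℂ) :
    ((MvPolynomial.aeval fun i =>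
        (Ideal.Quotient.mk (Ideal.span {(Polynomial.X : Polynomial ℂ) ^ 3}))
          (Polynomial.C (p' i) * Polynomial.X + Polynomial.C (p'' i) * Polynomial.X ^ 2)) f
        = (0 : Ceps3)) ↔
      constantCoeff f = 0 ∧
        MvPolynomial.eval p' (homogeneousComponent 1 f) = 0 ∧
        MvPolynomial.eval p' (homogeneousComponent 2 f) +
          MvPolynomial.eval p'' (homogeneousComponent 1 f) = 0 := by
  have hmk : (MvPolynomial.aeval fun i =>
        (Ideal.Quotient.mk (Ideal.span {(Polynomial.X : Polynomial ℂ) ^ 3}))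
          (Polynomial.C (p' i) * Polynomial.X + Polynomial.C (p'' i) * Polynomial.X ^ 2)) f
      = Ideal.Quotient.mk (Ideal.span {(Polynomial.X : Polynomial ℂ) ^ 3})
          (MvPolynomial.aeval (subs p' p'') f) := by
    rw [← Ideal.Quotient.mkₐ_eq_mk ℂ, MvPolynomial.comp_aeval_apply]
    rfl
  rw [hmk, Ideal.Quotient.eq_zero_iff_mem, Ideal.mem_span_singleton]
  rw [Polynomial.X_pow_dvd_iff]
  constructor
  · intro h
    refine ⟨?_, ?_, ?_⟩
    · rw [← coeff_zero_aeval_subs p' p'' f]; exact h 0 (by norm_num)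
    · rw [← coeff_one_aeval_subs p' p'' f]; exact h 1 (by norm_num)
    · rw [← coeff_two_aeval_subs p' p'' f]; exact h 2 (by norm_num)
  · rintro ⟨h0, h1, h2⟩ d hd
    interval_cases d
    · rw [coeff_zero_aeval_subs]; exact h0
    · rw [coeff_one_aeval_subs]; exact h1
    · rw [coeff_two_aeval_subs]; exact h2

/-- Proposition 2.2 (Hensel lifting for the degree 2 approximation of the tangent cone),
at the point `p = 0`. `J` is the ideal generated by the initial forms of the nonzero elements
of `I`. -/
theorem hensel_degree_two_tangent_cone
    (n : ℕ) (hn : 1 ≤ n) (I : Ideal (MvPolynomial (Fin n) ℂ))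
    (hI : ∀ f ∈ I, MvPolynomial.eval (0 : Fin n → ℂ) f = 0)
    (J : Ideal (MvPolynomial (Fin n) ℂ))
    (hJ : J = Ideal.span {g | ∃ f ∈ I, f ≠ 0 ∧ ∃ d : ℕ,
      g = MvPolynomial.homogeneousComponent d f ∧
      MvPolynomial.homogeneousComponent d f ≠ 0 ∧
      ∀ d' < d, MvPolynomial.homogeneousComponent d' f = 0})
    (p' : Fin n → ℂ) :
    (∀ g ∈ J, (∃ d ≤ 2, g.IsHomogeneous d) → MvPolynomial.eval p' g = 0) ↔
    ∃ p'' : Fin n → ℂ, ∀ f ∈ I,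
      MvPolynomial.aeval (fun i => (Ideal.Quotient.mk (Ideal.span {(Polynomial.X : Polynomial ℂ) ^ 3}))
        (Polynomial.C (p' i) * Polynomial.X + Polynomial.C (p'' i) * Polynomial.X ^ 2)) f
        = (0 : Ceps3) := by
  set S : Set (MvPolynomial (Fin n) ℂ) := {g | ∃ f ∈ I, f ≠ 0 ∧ ∃ d : ℕ,
      g = MvPolynomial.homogeneousComponent d f ∧
      MvPolynomial.homogeneousComponent d f ≠ 0 ∧
      ∀ d' < d, MvPolynomial.homogeneousComponent d' f = 0} with hS
  have hconst : ∀ f ∈ I, constantCoeff f = 0 := by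
    intro f hf
    have h0 := hI f hf
    rwa [MvPolynomial.eval_zero] at h0
  have hc0 : ∀ f ∈ I, homogeneousComponent 0 f = 0 := by
    intro f hf
    rw [homogeneousComponent_zero]
    have hcc : MvPolynomial.coeff 0 f = constantCoeff f := rfl
    rw [hcc, hconst f hf, map_zero]
  constructor
  · intro h
    have hmemJ : ∀ g ∈ S, g ∈ J := by
      rw [hJ]; exact fun g hg => Ideal.subset_span hg
    have claim1 : ∀ f ∈ I, MvPolynomial.eval p' (homogeneousComponent 1 f) = 0 := by
      intro f hf
      by_cases h1 : homogeneousComponent 1 f = 0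
      · rw [h1, map_zero]
      · refine h _ (hmemJ _ ?_) ⟨1, by norm_num, homogeneousComponent_isHomogeneous 1 f⟩
        exact ⟨f, hf, fun h0 => h1 (by rw [h0, map_zero]), 1, rfl, h1,
          fun d' hd' => by interval_cases d'; exact hc0 f hf⟩
    have claim2 : ∀ f ∈ I, homogeneousComponent 1 f = 0 →
        MvPolynomial.eval p' (homogeneousComponent 2 f) = 0 := by
      intro f hf h1
      by_cases h2 : homogeneousComponent 2 f = 0
      · rw [h2, map_zero]
      · refine h _ (hmemJ _ ?_) ⟨2, le_refl 2, homogeneousComponent_isHomogeneous 2 f⟩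
        exact ⟨f, hf, fun h0 => h2 (by rw [h0, map_zero]), 2, rfl, h2,
          fun d' hd' => by interval_cases d' <;> [exact hc0 f hf; exact h1]⟩
    set ψ : MvPolynomial (Fin n) ℂ →ₗ[ℂ] (Fin n → ℂ) × ℂ := LinearMap.prod cv (q2 p') with hψ
    set ψI : _ →ₗ[ℂ] (Fin n → ℂ) × ℂ := ψ ∘ₗ (Submodule.restrictScalars ℂ I).subtype with hψI
    set M := LinearMap.range ψI with hM
    set πM : M →ₗ[ℂ] (Fin n → ℂ) := (LinearMap.fst ℂ _ _) ∘ₗ M.subtype with hπM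
    have hker : LinearMap.ker πM = ⊥ := by
      rw [LinearMap.ker_eq_bot']
      rintro ⟨x, hx⟩ hx0
      obtain ⟨f, rfl⟩ := hx
      have hcv : cv (f : MvPolynomial (Fin n) ℂ) = 0 := hx0
      have h1 : homogeneousComponent 1 (f : MvPolynomial (Fin n) ℂ) = 0 := by
        rw [hc_one_eq_sum]
        apply Finset.sum_eq_zero
        intro i _
        have hci : MvPolynomial.coeff (Finsupp.single i 1) (f : MvPolynomial (Fin n) ℂ) = 0 := by
          rw [← cv_apply, hcv]; rfl
        rw [hci, map_zero]
      have hq : q2 p' (f : MvPolynomial (Fin n) ℂ) = 0 := claim2 _ f.2 h1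
      apply Subtype.ext
      show ψI f = 0
      have hval : ψI f = (cv (f : MvPolynomial (Fin n) ℂ), q2 p' (f : MvPolynomial (Fin n) ℂ)) := rfl
      rw [hval, hcv, hq]; rfl
    obtain ⟨ρ, hρ⟩ := LinearMap.exists_leftInverse_of_injective πM hker
    set φ0 : M →ₗ[ℂ] ℂ := (LinearMap.snd ℂ _ _) ∘ₗ M.subtype with hφ0
    set g : (Fin n → ℂ) →ₗ[ℂ] ℂ := φ0 ∘ₗ ρ with hg
    refine ⟨fun i => - g (Pi.single i 1), ?_⟩
    intro f hf
    rw [quot_zero_iff]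
    set x : M := ⟨ψI ⟨f, hf⟩, ⟨⟨f, hf⟩, rfl⟩⟩ with hx
    have hρx : ρ (πM x) = x := by
      rw [← LinearMap.comp_apply, hρ, LinearMap.id_apply]
    have hgcv : g (cv f) = MvPolynomial.eval p' (homogeneousComponent 2 f) := by
      have h1 : cv f = πM x := rfl
      have h2 : g (cv f) = φ0 (ρ (cv f)) := rfl
      rw [h2, h1, hρx]
      rfl
    have heval'' : MvPolynomial.eval (fun i => - g (Pi.single i 1)) (homogeneousComponent 1 f)
        = - MvPolynomial.eval p' (homogeneousComponent 2 f) := by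
      rw [eval_hc_one]
      have step : ∀ i : Fin n, MvPolynomial.coeff (Finsupp.single i 1) f * (- g (Pi.single i 1))
          = - g (Pi.single i (MvPolynomial.coeff (Finsupp.single i 1) f)) := by
        intro i
        have hsingle : Pi.single i (MvPolynomial.coeff (Finsupp.single i 1) f)
            = MvPolynomial.coeff (Finsupp.single i 1) f • (Pi.single i (1 : ℂ) : Fin n → ℂ) := by
          funext j
          by_cases hji : j = i
          · subst hji; simp
          · simp [Pi.single_eq_of_ne hji]
        rw [hsingle, map_smul, smul_eq_mul]
        ring
      rw [Finset.sum_congr rfl (fun i _ => step i), Finset.sum_neg_distrib, ← map_sum]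
      have hsum : (∑ i : Fin n, Pi.single i (MvPolynomial.coeff (Finsupp.single i 1) f)) = cv f := by
        rw [Finset.univ_sum_single]
        rfl
      rw [hsum, hgcv]
    exact ⟨hconst f hf, claim1 f hf, by rw [heval'']; ring⟩
  · rintro ⟨p'', hp⟩ g hgJ ⟨d, hd2, hdhom⟩
    have key := fun f hf => (quot_zero_iff p' p'' f).mp (hp f hf)
    rw [hJ] at hgJ
    obtain ⟨N, r, gens, hsum⟩ := Submodule.mem_span_set'.mp hgJ
    have hg_eq : homogeneousComponent d g = g := by
      have h' := homogeneousComponent_of_mem (m := d)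
        ((mem_homogeneousSubmodule _ _).mpr hdhom)
      rwa [if_pos rfl] at h'
    rw [← hg_eq, ← hsum, map_sum, map_sum]
    apply Finset.sum_eq_zero
    intro i _
    obtain ⟨f, hfI, hfne, e, hs_eq, hs_ne, hlow⟩ := (gens i).2
    rw [smul_eq_mul, hc_mul_homog d e _ (hs_eq ▸ homogeneousComponent_isHomogeneous e f)]
    split_ifs with he
    · rw [map_mul]
      have hse : MvPolynomial.eval p' ((gens i : MvPolynomial (Fin n) ℂ)) = 0 := by
        have he2 : e ≤ 2 := le_trans he hd2
        interval_cases e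
        · exact absurd (hc0 f hfI) (hs_eq ▸ hs_ne)
        · rw [hs_eq]; exact (key f hfI).2.1
        · rw [hs_eq]
          have h1 : homogeneousComponent 1 f = 0 := hlow 1 (by norm_num)
          have h2 := (key f hfI).2.2
          rwa [h1, map_zero, add_zero] at h2
      rw [hse, mul_zero]
    · rw [map_zero]
end
end

section
/- Let l₀,…,l₄ be ℂ-linearly independent linear forms in R and let t ∈ ℂ. Let M_t be the 6×6 skew-symmetric matrix over R with rows (0, l₃, 0, 0, l₀, l₁), (−l₃, 0, 0, −l₀, 0, l₂), (0, 0, 0, −l₁, −l₂, 0), (0, l₀, l₁, 0, l₃ + t·l₄, 0), (−l₀, 0, l₂, −(l₃ + t·l₄), 0, 0), (−l₁, −l₂, 0, 0, 0, 0). Then Pf(M_t) = 0, and the radical of the sub-Pfaffian ideal I₄(M_t) equals the radical of the ideal of R generated by l₁, l₂ and l₀² − l₃² − t·l₃·l₄. -/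
open MvPolynomial Matrix

noncomputable section

/-- The sub-Pfaffian ideal `I₄(N)`, generated by the fifteen sub-Pfaffians. -/
def pfIdeal4 {A : Type*} [CommRing A] (N : Matrix (Fin 6) (Fin 6) A) : Ideal A :=
  Ideal.span {x | ∃ α β : Fin 6, α < β ∧ x = subPf N α β}

/-- Auxiliary: the matrix of the family. -/
def Mmat (l : Fin 5 → Rp) (t : ℂ) : Matrix (Fin 6) (Fin 6) Rp :=
  !![0, l 3, 0, 0, l 0, l 1;
     -l 3, 0, 0, -l 0, 0, l 2;
     0, 0, 0, -l 1, -l 2, 0;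
     0, l 0, l 1, 0, l 3 + MvPolynomial.C t * l 4, 0;
     -l 0, 0, l 2, -(l 3 + MvPolynomial.C t * l 4), 0, 0;
     -l 1, -l 2, 0, 0, 0, 0]

lemma sub01 (l : Fin 5 → Rp) (t : ℂ) : subPf (Mmat l t) 0 1 = 0 := by
  simp only [subPf]
  rw [show (List.finRange 6).filter (fun i => decide (i ≠ (0:Fin 6)) && decide (i ≠ 1)) = [2,3,4,5] from by decide]
  simp [Mmat, Matrix.cons_val_succ, Matrix.vecHead, Matrix.vecTail, show ((5:Fin 6)) = (4:Fin 5).succ from rfl]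
  try ring

lemma sub02 (l : Fin 5 → Rp) (t : ℂ) : subPf (Mmat l t) 0 2 = (l 3 + MvPolynomial.C t * l 4) * l 2 := by
  simp only [subPf]
  rw [show (List.finRange 6).filter (fun i => decide (i ≠ (0:Fin 6)) && decide (i ≠ 2)) = [1,3,4,5] from by decide]
  simp [Mmat, Matrix.cons_val_succ, Matrix.vecHead, Matrix.vecTail, show ((5:Fin 6)) = (4:Fin 5).succ from rfl]
  try ring

lemma sub03 (l : Fin 5 → Rp) (t : ℂ) : subPf (Mmat l t) 0 3 = -(l 2 * l 2) := by
  simp only [subPf]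
  rw [show (List.finRange 6).filter (fun i => decide (i ≠ (0:Fin 6)) && decide (i ≠ 3)) = [1,2,4,5] from by decide]
  simp [Mmat, Matrix.cons_val_succ, Matrix.vecHead, Matrix.vecTail, show ((5:Fin 6)) = (4:Fin 5).succ from rfl]
  try ring

lemma sub04 (l : Fin 5 → Rp) (t : ℂ) : subPf (Mmat l t) 0 4 = -(l 1 * l 2) := by
  simp only [subPf]
  rw [show (List.finRange 6).filter (fun i => decide (i ≠ (0:Fin 6)) && decide (i ≠ 4)) = [1,2,3,5] from by decide]
  simp [Mmat, Matrix.cons_val_succ, Matrix.vecHead, Matrix.vecTail, show ((5:Fin 6)) = (4:Fin 5).succ from rfl]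
  try ring

lemma sub05 (l : Fin 5 → Rp) (t : ℂ) : subPf (Mmat l t) 0 5 = -(l 0 * l 2) := by
  simp only [subPf]
  rw [show (List.finRange 6).filter (fun i => decide (i ≠ (0:Fin 6)) && decide (i ≠ 5)) = [1,2,3,4] from by decide]
  simp [Mmat, Matrix.cons_val_succ, Matrix.vecHead, Matrix.vecTail, show ((5:Fin 6)) = (4:Fin 5).succ from rfl]
  try ring

lemma sub12 (l : Fin 5 → Rp) (t : ℂ) : subPf (Mmat l t) 1 2 = (l 3 + MvPolynomial.C t * l 4) * l 1 := by
  simp only [subPf]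
  rw [show (List.finRange 6).filter (fun i => decide (i ≠ (1:Fin 6)) && decide (i ≠ 2)) = [0,3,4,5] from by decide]
  simp [Mmat, Matrix.cons_val_succ, Matrix.vecHead, Matrix.vecTail, show ((5:Fin 6)) = (4:Fin 5).succ from rfl]
  try ring

lemma sub13 (l : Fin 5 → Rp) (t : ℂ) : subPf (Mmat l t) 1 3 = -(l 1 * l 2) := by
  simp only [subPf]
  rw [show (List.finRange 6).filter (fun i => decide (i ≠ (1:Fin 6)) && decide (i ≠ 3)) = [0,2,4,5] from by decide]
  simp [Mmat, Matrix.cons_val_succ, Matrix.vecHead, Matrix.vecTail, show ((5:Fin 6)) = (4:Fin 5).succ from rfl]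
  try ring

lemma sub14 (l : Fin 5 → Rp) (t : ℂ) : subPf (Mmat l t) 1 4 = -(l 1 * l 1) := by
  simp only [subPf]
  rw [show (List.finRange 6).filter (fun i => decide (i ≠ (1:Fin 6)) && decide (i ≠ 4)) = [0,2,3,5] from by decide]
  simp [Mmat, Matrix.cons_val_succ, Matrix.vecHead, Matrix.vecTail, show ((5:Fin 6)) = (4:Fin 5).succ from rfl]
  try ring

lemma sub15 (l : Fin 5 → Rp) (t : ℂ) : subPf (Mmat l t) 1 5 = -(l 0 * l 1) := by
  simp only [subPf]
  rw [show (List.finRange 6).filter (fun i => decide (i ≠ (1:Fin 6)) && decide (i ≠ 5)) = [0,2,3,4] from by decide]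
  simp [Mmat, Matrix.cons_val_succ, Matrix.vecHead, Matrix.vecTail, show ((5:Fin 6)) = (4:Fin 5).succ from rfl]
  try ring

lemma sub23 (l : Fin 5 → Rp) (t : ℂ) : subPf (Mmat l t) 2 3 = -(l 0 * l 2) := by
  simp only [subPf]
  rw [show (List.finRange 6).filter (fun i => decide (i ≠ (2:Fin 6)) && decide (i ≠ 3)) = [0,1,4,5] from by decide]
  simp [Mmat, Matrix.cons_val_succ, Matrix.vecHead, Matrix.vecTail, show ((5:Fin 6)) = (4:Fin 5).succ from rfl]
  try ring

lemma sub24 (l : Fin 5 → Rp) (t : ℂ) : subPf (Mmat l t) 2 4 = -(l 0 * l 1) := by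
  simp only [subPf]
  rw [show (List.finRange 6).filter (fun i => decide (i ≠ (2:Fin 6)) && decide (i ≠ 4)) = [0,1,3,5] from by decide]
  simp [Mmat, Matrix.cons_val_succ, Matrix.vecHead, Matrix.vecTail, show ((5:Fin 6)) = (4:Fin 5).succ from rfl]
  try ring

lemma sub25 (l : Fin 5 → Rp) (t : ℂ) : subPf (Mmat l t) 2 5 = -(l 0 ^ 2 - l 3 ^ 2 - MvPolynomial.C t * (l 3 * l 4)) := by
  simp only [subPf]
  rw [show (List.finRange 6).filter (fun i => decide (i ≠ (2:Fin 6)) && decide (i ≠ 5)) = [0,1,3,4] from by decide]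
  simp [Mmat, Matrix.cons_val_succ, Matrix.vecHead, Matrix.vecTail, show ((5:Fin 6)) = (4:Fin 5).succ from rfl]
  try ring

lemma sub34 (l : Fin 5 → Rp) (t : ℂ) : subPf (Mmat l t) 3 4 = 0 := by
  simp only [subPf]
  rw [show (List.finRange 6).filter (fun i => decide (i ≠ (3:Fin 6)) && decide (i ≠ 4)) = [0,1,2,5] from by decide]
  simp [Mmat, Matrix.cons_val_succ, Matrix.vecHead, Matrix.vecTail, show ((5:Fin 6)) = (4:Fin 5).succ from rfl]
  try ring

lemma sub35 (l : Fin 5 → Rp) (t : ℂ) : subPf (Mmat l t) 3 5 = -(l 2 * l 3) := by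
  simp only [subPf]
  rw [show (List.finRange 6).filter (fun i => decide (i ≠ (3:Fin 6)) && decide (i ≠ 5)) = [0,1,2,4] from by decide]
  simp [Mmat, Matrix.cons_val_succ, Matrix.vecHead, Matrix.vecTail, show ((5:Fin 6)) = (4:Fin 5).succ from rfl]
  try ring

lemma sub45 (l : Fin 5 → Rp) (t : ℂ) : subPf (Mmat l t) 4 5 = -(l 1 * l 3) := by
  simp only [subPf]
  rw [show (List.finRange 6).filter (fun i => decide (i ≠ (4:Fin 6)) && decide (i ≠ 5)) = [0,1,2,3] from by decide]
  simp [Mmat, Matrix.cons_val_succ, Matrix.vecHead, Matrix.vecTail, show ((5:Fin 6)) = (4:Fin 5).succ from rfl]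
  try ring

lemma pf_Mmat (l : Fin 5 → Rp) (t : ℂ) : pf (Mmat l t) = 0 := by
  rw [pf, sub01, sub02, sub03, sub04, sub05]
  simp [Mmat, Matrix.cons_val_succ, Matrix.vecHead, Matrix.vecTail, show ((5:Fin 6)) = (4:Fin 5).succ from rfl]
  try ring

/-- The family exhibiting the specialization of type (a) matrices to a type (c) matrix. -/
theorem family_a_to_c
    (l : Fin 5 → Rp) (hl : ∀ i, (l i).IsHomogeneous 1) (hind : LinearIndependent ℂ l)
    (t : ℂ) (Mt : Matrix (Fin 6) (Fin 6) Rp)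
    (hMt : Mt = !![0, l 3, 0, 0, l 0, l 1;
                 -l 3, 0, 0, -l 0, 0, l 2;
                 0, 0, 0, -l 1, -l 2, 0;
                 0, l 0, l 1, 0, l 3 + MvPolynomial.C t * l 4, 0;
                 -l 0, 0, l 2, -(l 3 + MvPolynomial.C t * l 4), 0, 0;
                 -l 1, -l 2, 0, 0, 0, 0]) :
    pf Mt = 0 ∧
    (pfIdeal4 Mt).radical = (Ideal.span {l 1, l 2,
        l 0 ^ 2 - l 3 ^ 2 - MvPolynomial.C t * (l 3 * l 4)}).radical := by
  have hM : Mt = Mmat l t := hMt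
  subst hM
  refine ⟨pf_Mmat l t, ?_⟩
  set K : Ideal Rp := Ideal.span {l 1, l 2,
    l 0 ^ 2 - l 3 ^ 2 - MvPolynomial.C t * (l 3 * l 4)} with hK
  have hm1 : l 1 ∈ K := Ideal.subset_span (by simp)
  have hm2 : l 2 ∈ K := Ideal.subset_span (by simp)
  have hmg : l 0 ^ 2 - l 3 ^ 2 - MvPolynomial.C t * (l 3 * l 4) ∈ K :=
    Ideal.subset_span (by simp)
  have hIK : pfIdeal4 (Mmat l t) ≤ K := by
    rw [pfIdeal4, Ideal.span_le]
    rintro x ⟨α, β, hab, rfl⟩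
    fin_cases α <;> fin_cases β <;>
      simp only [Fin.mk_zero, Fin.mk_one,
        show (⟨2, by omega⟩ : Fin 6) = 2 from rfl,
        show (⟨3, by omega⟩ : Fin 6) = 3 from rfl,
        show (⟨4, by omega⟩ : Fin 6) = 4 from rfl,
        show (⟨5, by omega⟩ : Fin 6) = 5 from rfl] <;>
      first
        | exact absurd hab (by decide)
        | skip
    · rw [sub01]; exact K.zero_mem
    · rw [sub02]; exact K.mul_mem_left _ hm2
    · rw [sub03]; exact K.neg_mem (K.mul_mem_left _ hm2)
    · rw [sub04]; exact K.neg_mem (K.mul_mem_left _ hm2)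
    · rw [sub05]; exact K.neg_mem (K.mul_mem_left _ hm2)
    · rw [sub12]; exact K.mul_mem_left _ hm1
    · rw [sub13]; exact K.neg_mem (K.mul_mem_left _ hm2)
    · rw [sub14]; exact K.neg_mem (K.mul_mem_left _ hm1)
    · rw [sub15]; exact K.neg_mem (K.mul_mem_left _ hm1)
    · rw [sub23]; exact K.neg_mem (K.mul_mem_left _ hm2)
    · rw [sub24]; exact K.neg_mem (K.mul_mem_left _ hm1)
    · rw [sub25]; exact K.neg_mem hmg
    · rw [sub34]; exact K.zero_mem
    · rw [sub35]; exact K.neg_mem (K.mul_mem_right _ hm2)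
    · rw [sub45]; exact K.neg_mem (K.mul_mem_right _ hm1)
  have hmemI : ∀ α β : Fin 6, α < β → subPf (Mmat l t) α β ∈ pfIdeal4 (Mmat l t) :=
    fun α β h => Ideal.subset_span ⟨α, β, h, rfl⟩
  have hKI : K ≤ (pfIdeal4 (Mmat l t)).radical := by
    rw [hK, Ideal.span_le]
    rintro x hx
    simp only [Set.mem_insert_iff, Set.mem_singleton_iff] at hx
    rcases hx with rfl | rfl | rfl
    · exact ⟨2, by
        have := hmemI 1 4 (by decide)
        rw [sub14] at this
        simpa [pow_two] using (pfIdeal4 (Mmat l t)).neg_mem this⟩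
    · exact ⟨2, by
        have := hmemI 0 3 (by decide)
        rw [sub03] at this
        simpa [pow_two] using (pfIdeal4 (Mmat l t)).neg_mem this⟩
    · refine Ideal.le_radical ?_
      have := hmemI 2 5 (by decide)
      rw [sub25] at this
      simpa using (pfIdeal4 (Mmat l t)).neg_mem this
  exact le_antisymm (Ideal.radical_mono hIK)
    ((Ideal.radical_mono hKI).trans (le_of_eq (Ideal.radical_idem _)))
end
end

section
/- Let l₀,…,l₄ be ℂ-linearly independent linear forms in R and let t ∈ ℂ. Let M_t be the 6×6 skew-symmetric matrix over R with rows (0, t²·l₃, t²·l₄, 0, l₀, l₁), (−t²·l₃, 0, 0, −l₀, 0, l₂), (−t²·l₄, 0, 0, −l₁, −l₂, 0), (0, l₀, l₁, 0, l₃, l₄), (−l₀, 0, l₂, −l₃, 0, 0), (−l₁, −l₂, 0, −l₄, 0, 0). Then Pf(M_t) = 0, and the radical of the sub-Pfaffian ideal I₄(M_t) equals the intersection of the ideal of R generated by l₂, l₁ + t·l₄, l₀ + t·l₃ and the ideal of R generated by l₂, l₁ − t·l₄, l₀ − t·l₃. -/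
open MvPolynomial Matrix

noncomputable section

lemma mem_span3 {R : Type*} [CommRing R] {g1 g2 g3 x : R} (c1 c2 c3 : R)
    (h : x = c1 * g1 + c2 * g2 + c3 * g3) : x ∈ Ideal.span {g1, g2, g3} := by
  subst h
  refine Ideal.add_mem _ (Ideal.add_mem _ ?_ ?_) ?_ <;>
    exact Ideal.mul_mem_left _ _ (Ideal.subset_span (by simp))

lemma comb2 {R : Type*} [CommRing R] {I : Ideal R} {q1 q2 x : R} (c1 c2 : R)
    (h1 : q1 ∈ I) (h2 : q2 ∈ I) (h : x = c1 * q1 + c2 * q2) : x ∈ I :=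
  h ▸ I.add_mem (I.mul_mem_left c1 h1) (I.mul_mem_left c2 h2)

lemma degree_one_single {σ : Type*} [DecidableEq σ] {d : σ →₀ ℕ} (h : Finsupp.degree d = 1) :
    ∃ j, d = Finsupp.single j 1 := by
  have hne : d.support.Nonempty := by
    rcases Finset.eq_empty_or_nonempty d.support with he | hne
    · exfalso; rw [Finsupp.degree_apply, he] at h; simp at h
    · exact hne
  obtain ⟨j, hj⟩ := hne
  refine ⟨j, ?_⟩
  have hdj : d j = 1 := by
    have h1 : 1 ≤ d j := Nat.one_le_iff_ne_zero.mpr (Finsupp.mem_support_iff.mp hj)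
    have h2 : d j ≤ 1 := h ▸ Finsupp.le_degree j d
    omega
  have hsub : d.support ⊆ {j} := by
    intro i hi
    by_contra hij
    simp only [Finset.mem_singleton] at hij
    have h2 : d i + d j ≤ Finsupp.degree d := by
      rw [Finsupp.degree_apply]
      have : ({i, j} : Finset σ) ⊆ d.support := by
        intro z hz; simp only [Finset.mem_insert, Finset.mem_singleton] at hz
        rcases hz with rfl | rfl <;> assumption
      calc d i + d j = ∑ z ∈ ({i, j} : Finset σ), d z := by rw [Finset.sum_pair hij]
        _ ≤ _ := Finset.sum_le_sum_of_subset this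
    have h1 : 1 ≤ d i := Nat.one_le_iff_ne_zero.mpr (Finsupp.mem_support_iff.mp hi)
    omega
  ext i
  rcases eq_or_ne i j with rfl | hij
  · simp [hdj]
  · have : i ∉ d.support := fun hi => hij (Finset.mem_singleton.mp (hsub hi))
    simp only [Finsupp.notMem_support_iff] at this
    rw [this]
    exact (Finsupp.single_eq_of_ne' (fun h' => hij h'.symm)).symm

lemma linform_eq_sum (p : Rp) (hp : p.IsHomogeneous 1) :
    p = ∑ j, MvPolynomial.C (coeff (Finsupp.single j 1) p) * X j := by
  apply MvPolynomial.ext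
  intro m
  rw [coeff_sum]
  simp only [coeff_C_mul, coeff_X']
  by_cases hm : Finsupp.degree m = 1
  · obtain ⟨j, rfl⟩ := degree_one_single hm
    rw [Finset.sum_eq_single j]
    · simp
    · intro b _ hbj
      simp only [mul_ite, mul_one, mul_zero, ite_eq_right_iff]
      intro he
      exact absurd (by simpa using (Finsupp.single_left_injective one_ne_zero) he) hbj
    · simp
  · rw [hp.coeff_eq_zero hm]
    refine (Finset.sum_eq_zero fun j _ => ?_).symm
    have : Finsupp.single j 1 ≠ m := by
      intro he
      apply hm
      rw [← he, Finsupp.degree_apply, Finsupp.support_single_ne_zero _ one_ne_zero]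
      simp
    simp [this]

lemma span_X012_prime : (Ideal.span {X 0, X 1, X 2} : Ideal Rp).IsPrime := by
  set g : Fin 5 → Rp := ![0, 0, 0, X 3, X 4] with hg
  have key : ∀ p : Rp, p - aeval g p ∈ Ideal.span ({X 0, X 1, X 2} : Set Rp) := by
    intro p
    induction p using MvPolynomial.induction_on with
    | C a => simp [aeval_C, MvPolynomial.algebraMap_eq]
    | add p q hp hq =>
        have := Ideal.add_mem _ hp hq
        rw [map_add]
        convert this using 1
        ring
    | mul_X p i hp =>
        rw [_root_.map_mul, aeval_X]
        fin_cases i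
        · show p * X 0 - (aeval g) p * (0 : Rp) ∈ _
          rw [mul_zero, sub_zero]
          exact Ideal.mul_mem_left _ _ (Ideal.subset_span (by simp))
        · show p * X 1 - (aeval g) p * (0 : Rp) ∈ _
          rw [mul_zero, sub_zero]
          exact Ideal.mul_mem_left _ _ (Ideal.subset_span (by simp))
        · show p * X 2 - (aeval g) p * (0 : Rp) ∈ _
          rw [mul_zero, sub_zero]
          exact Ideal.mul_mem_left _ _ (Ideal.subset_span (by simp))
        · show p * X 3 - (aeval g) p * X 3 ∈ _
          have := Ideal.mul_mem_right (X 3) _ hp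
          convert this using 1
          ring
        · show p * X 4 - (aeval g) p * X 4 ∈ _
          have := Ideal.mul_mem_right (X 4) _ hp
          convert this using 1
          ring
  have hker : (Ideal.span {X 0, X 1, X 2} : Ideal Rp) = RingHom.ker (aeval g : Rp →ₐ[ℂ] Rp) := by
    apply le_antisymm
    · rw [Ideal.span_le]
      intro x hx
      simp only [Set.mem_insert_iff, Set.mem_singleton_iff] at hx
      rcases hx with rfl | rfl | rfl <;>
        · simp only [SetLike.mem_coe, RingHom.mem_ker, aeval_X]
          rfl
    · intro p hp
      rw [RingHom.mem_ker] at hp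
      have := key p
      rwa [hp, sub_zero] at this
  rw [hker]
  exact RingHom.ker_isPrime _

lemma span3_prime (u : Fin 5 → Rp) (hu : ∀ i, (u i).IsHomogeneous 1)
    (hind : LinearIndependent ℂ u) : (Ideal.span {u 0, u 1, u 2}).IsPrime := by
  classical
  set L : Matrix (Fin 5) (Fin 5) ℂ := fun i j => coeff (Finsupp.single j 1) (u i) with hL
  have hrep : ∀ i, u i = ∑ j, MvPolynomial.C (L i j) * X j := fun i => linform_eq_sum (u i) (hu i)
  -- rows of L are linearly independent
  have hrows : LinearIndependent ℂ (fun i => L i) := by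
    rw [Fintype.linearIndependent_iff]
    intro c hc
    have hc' : ∀ j, ∑ i, c i * L i j = 0 := by
      intro j
      have := congrFun hc j
      simpa [Finset.sum_apply] using this
    have hsum : ∑ i, c i • u i = 0 := by
      calc ∑ i, c i • u i = ∑ i, ∑ j, MvPolynomial.C (c i * L i j) * X j := by
            refine Finset.sum_congr rfl fun i _ => ?_
            rw [hrep i, smul_eq_C_mul, Finset.mul_sum]
            exact Finset.sum_congr rfl fun j _ => by rw [_root_.map_mul, mul_assoc]
        _ = ∑ j, ∑ i, MvPolynomial.C (c i * L i j) * X j := Finset.sum_comm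
        _ = ∑ j, MvPolynomial.C (∑ i, c i * L i j) * X j := by
            refine Finset.sum_congr rfl fun j _ => ?_
            rw [map_sum, Finset.sum_mul]
        _ = 0 := by simp [hc']
    exact Fintype.linearIndependent_iff.mp hind c hsum
  have hunit : IsUnit L := Matrix.linearIndependent_rows_iff_isUnit.mp hrows
  have hdet : IsUnit L.det := (Matrix.isUnit_iff_isUnit_det L).mp hunit
  set B : Matrix (Fin 5) (Fin 5) ℂ := L⁻¹ with hB
  have hLB : L * B = 1 := Matrix.mul_nonsing_inv L hdet
  have hBL : B * L = 1 := Matrix.nonsing_inv_mul L hdet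
  set w : Fin 5 → Rp := fun j => ∑ k, MvPolynomial.C (B j k) * X k with hw
  have key : ∀ (P Q : Matrix (Fin 5) (Fin 5) ℂ) (v : Fin 5 → Rp)
      (hv : ∀ j, v j = ∑ k, MvPolynomial.C (Q j k) * X k) (i : Fin 5),
      (aeval v) (∑ j, MvPolynomial.C (P i j) * X j) = ∑ k, MvPolynomial.C ((P * Q) i k) * X k := by
    intro P Q v hv i
    rw [map_sum]
    calc ∑ j, (aeval v) (MvPolynomial.C (P i j) * X j)
        = ∑ j, ∑ k, MvPolynomial.C (P i j * Q j k) * X k := by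
          refine Finset.sum_congr rfl fun j _ => ?_
          rw [_root_.map_mul, aeval_C, aeval_X, hv j, MvPolynomial.algebraMap_eq, Finset.mul_sum]
          exact Finset.sum_congr rfl fun k _ => by rw [_root_.map_mul, mul_assoc]
      _ = ∑ k, ∑ j, MvPolynomial.C (P i j * Q j k) * X k := Finset.sum_comm
      _ = ∑ k, MvPolynomial.C ((P * Q) i k) * X k := by
          refine Finset.sum_congr rfl fun k _ => ?_
          rw [Matrix.mul_apply, map_sum, Finset.sum_mul]
  have hone : ∀ i : Fin 5, ∑ k, MvPolynomial.C ((1 : Matrix (Fin 5) (Fin 5) ℂ) i k) * X k = (X i : Rp) := by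
    intro i
    rw [Finset.sum_eq_single i] <;> simp +contextual [Matrix.one_apply, Ne, eq_comm]
  have h1 : ∀ i, (aeval w) (u i) = X i := by
    intro i
    rw [hrep i, key L B w (fun j => rfl) i, hLB, hone]
  have h2 : ∀ j, (aeval u) (w j) = X j := by
    intro j
    have : w j = ∑ k, MvPolynomial.C (B j k) * X k := rfl
    rw [this, key B L u hrep j, hBL, hone]
  set e : Rp ≃ₐ[ℂ] Rp := AlgEquiv.ofAlgHom (aeval u) (aeval w)
    (MvPolynomial.algHom_ext fun i => by rw [AlgHom.comp_apply, aeval_X, h2 i, AlgHom.id_apply])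
    (MvPolynomial.algHom_ext fun i => by rw [AlgHom.comp_apply, aeval_X, h1 i, AlgHom.id_apply]) with he
  have hmap : Ideal.span {u 0, u 1, u 2} = Ideal.map e (Ideal.span ({X 0, X 1, X 2} : Set Rp)) := by
    rw [Ideal.map_span]
    congr 1
    rw [Set.image_insert_eq, Set.image_insert_eq, Set.image_singleton]
    have : ∀ i : Fin 5, e (X i) = u i := fun i => aeval_X u i
    rw [this 0, this 1, this 2]
  rw [hmap]
  haveI := span_X012_prime
  exact Ideal.map_isPrime_of_equiv e

set_option maxHeartbeats 3200000 in
/-- The family exhibiting the specialization of type (b) matrices to a type (d) matrix. -/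
theorem family_b_to_d
    (l : Fin 5 → Rp) (hl : ∀ i, (l i).IsHomogeneous 1) (hind : LinearIndependent ℂ l)
    (t : ℂ) (Mt : Matrix (Fin 6) (Fin 6) Rp)
    (hMt : Mt = !![0, MvPolynomial.C (t ^ 2) * l 3, MvPolynomial.C (t ^ 2) * l 4, 0, l 0, l 1;
                 -(MvPolynomial.C (t ^ 2) * l 3), 0, 0, -l 0, 0, l 2;
                 -(MvPolynomial.C (t ^ 2) * l 4), 0, 0, -l 1, -l 2, 0;
                 0, l 0, l 1, 0, l 3, l 4;
                 -l 0, 0, l 2, -l 3, 0, 0;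
                 -l 1, -l 2, 0, -l 4, 0, 0]) :
    pf Mt = 0 ∧
    (pfIdeal4 Mt).radical = Ideal.span {l 2, l 1 + MvPolynomial.C t * l 4, l 0 + MvPolynomial.C t * l 3} ⊓
      Ideal.span {l 2, l 1 - MvPolynomial.C t * l 4, l 0 - MvPolynomial.C t * l 3} := by
  have ht2 : (MvPolynomial.C (t ^ 2) : Rp) = MvPolynomial.C t * MvPolynomial.C t := by
    rw [pow_two, _root_.map_mul]
  have hq01 : subPf Mt 0 1 = l 2 * l 4 := by
    rw [hMt]; show ((-l 1) * (0) - (-l 2) * (l 4) + (0) * (l 3) : Rp) = _; ring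
  have hq02 : subPf Mt 0 2 = l 2 * l 3 := by
    rw [hMt]; show ((-l 0) * (0) - (0) * (l 4) + (l 2) * (l 3) : Rp) = _; ring
  have hq03 : subPf Mt 0 3 = -(l 2 * l 2) := by
    rw [hMt]; show ((0) * (0) - (0) * (0) + (l 2) * (-l 2) : Rp) = _; ring
  have hq04 : subPf Mt 0 4 = -(l 1 * l 2) := by
    rw [hMt]; show ((0) * (l 4) - (-l 0) * (0) + (l 2) * (-l 1) : Rp) = _; ring
  have hq05 : subPf Mt 0 5 = -(l 0 * l 2) := by
    rw [hMt]; show ((0) * (l 3) - (-l 0) * (-l 2) + (0) * (-l 1) : Rp) = _; ring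
  have hq12 : subPf Mt 1 2 = l 1 * l 3 - l 0 * l 4 := by
    rw [hMt]; show ((0) * (0) - (l 0) * (l 4) + (l 1) * (l 3) : Rp) = _; ring
  have hq13 : subPf Mt 1 3 = -(l 1 * l 2) := by
    rw [hMt]; show ((MvPolynomial.C (t ^ 2) * l 4) * (0) - (l 0) * (0) + (l 1) * (-l 2) : Rp) = _; rw [ht2]; ring
  have hq14 : subPf Mt 1 4 = MvPolynomial.C t * MvPolynomial.C t * (l 4 * l 4) - l 1 * l 1 := by
    rw [hMt]; show ((MvPolynomial.C (t ^ 2) * l 4) * (l 4) - (0) * (0) + (l 1) * (-l 1) : Rp) = _; rw [ht2]; ring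
  have hq15 : subPf Mt 1 5 = MvPolynomial.C t * MvPolynomial.C t * (l 3 * l 4) - l 0 * l 1 := by
    rw [hMt]; show ((MvPolynomial.C (t ^ 2) * l 4) * (l 3) - (0) * (-l 2) + (l 0) * (-l 1) : Rp) = _; rw [ht2]; ring
  have hq23 : subPf Mt 2 3 = -(l 0 * l 2) := by
    rw [hMt]; show ((MvPolynomial.C (t ^ 2) * l 3) * (0) - (l 0) * (l 2) + (l 1) * (0) : Rp) = _; rw [ht2]; ring
  have hq24 : subPf Mt 2 4 = MvPolynomial.C t * MvPolynomial.C t * (l 3 * l 4) - l 0 * l 1 := by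
    rw [hMt]; show ((MvPolynomial.C (t ^ 2) * l 3) * (l 4) - (0) * (l 2) + (l 1) * (-l 0) : Rp) = _; rw [ht2]; ring
  have hq25 : subPf Mt 2 5 = MvPolynomial.C t * MvPolynomial.C t * (l 3 * l 3) - l 0 * l 0 := by
    rw [hMt]; show ((MvPolynomial.C (t ^ 2) * l 3) * (l 3) - (0) * (0) + (l 0) * (-l 0) : Rp) = _; rw [ht2]; ring
  have hq34 : subPf Mt 3 4 = -(MvPolynomial.C t * MvPolynomial.C t * (l 2 * l 4)) := by
    rw [hMt]; show ((MvPolynomial.C (t ^ 2) * l 3) * (0) - (MvPolynomial.C (t ^ 2) * l 4) * (l 2) + (l 1) * (0) : Rp) = _; rw [ht2]; ring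
  have hq35 : subPf Mt 3 5 = -(MvPolynomial.C t * MvPolynomial.C t * (l 2 * l 3)) := by
    rw [hMt]; show ((MvPolynomial.C (t ^ 2) * l 3) * (-l 2) - (MvPolynomial.C (t ^ 2) * l 4) * (0) + (l 0) * (0) : Rp) = _; rw [ht2]; ring
  have hq45 : subPf Mt 4 5 = MvPolynomial.C t * MvPolynomial.C t * (l 0 * l 4) - MvPolynomial.C t * MvPolynomial.C t * (l 1 * l 3) := by
    rw [hMt]; show ((MvPolynomial.C (t ^ 2) * l 3) * (-l 1) - (MvPolynomial.C (t ^ 2) * l 4) * (-l 0) + (0) * (0) : Rp) = _; rw [ht2]; ring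
  have hpf : pf Mt = 0 := by
    rw [hMt]
    show ((MvPolynomial.C (t ^ 2) * l 3) * (((-l 1) * (0) - (-l 2) * (l 4) + (0) * (l 3) : Rp)) - (MvPolynomial.C (t ^ 2) * l 4) * (((-l 0) * (0) - (0) * (l 4) + (l 2) * (l 3) : Rp)) + (0) * (((0) * (0) - (0) * (0) + (l 2) * (-l 2) : Rp)) - (l 0) * (((0) * (l 4) - (-l 0) * (0) + (l 2) * (-l 1) : Rp)) + (l 1) * (((0) * (l 3) - (-l 0) * (-l 2) + (0) * (-l 1) : Rp)) : Rp) = 0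
    rw [ht2]; ring
  refine ⟨hpf, ?_⟩
  -- primality of the two linear ideals
  have hprime1 : (Ideal.span ({l 2, l 1 + MvPolynomial.C t * l 4, l 0 + MvPolynomial.C t * l 3} : Set Rp)).IsPrime := by
    have h := span3_prime ![l 2, l 1 + MvPolynomial.C t * l 4, l 0 + MvPolynomial.C t * l 3, l 3, l 4]
      (by
        intro i; fin_cases i
        · exact hl 2
        · exact (hl 1).add ((hl 4).C_mul t)
        · exact (hl 0).add ((hl 3).C_mul t)
        · exact hl 3
        · exact hl 4)
      (by
        rw [Fintype.linearIndependent_iff]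
        intro c hc
        have hc' : c 0 • l 2 + c 1 • (l 1 + MvPolynomial.C t * l 4) +
            c 2 • (l 0 + MvPolynomial.C t * l 3) + c 3 • l 3 + c 4 • l 4 = 0 := by
          rw [Fin.sum_univ_five] at hc; exact hc
        have hd : ∀ j, (![c 2, c 1, c 0, t * c 2 + c 3, t * c 1 + c 4]) j = 0 := by
          apply Fintype.linearIndependent_iff.mp hind
          rw [Fin.sum_univ_five]
          show c 2 • l 0 + c 1 • l 1 + c 0 • l 2 + (t * c 2 + c 3) • l 3 + (t * c 1 + c 4) • l 4 = 0
          simp only [smul_eq_C_mul, map_add, _root_.map_mul] at hc' ⊢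
          linear_combination hc'
        intro i; fin_cases i
        · exact hd 2
        · exact hd 1
        · exact hd 0
        · have h3 : t * c 2 + c 3 = 0 := hd 3
          have h2 : c 2 = 0 := hd 0
          rw [h2, mul_zero, zero_add] at h3; exact h3
        · have h4 : t * c 1 + c 4 = 0 := hd 4
          have h1 : c 1 = 0 := hd 1
          rw [h1, mul_zero, zero_add] at h4; exact h4)
    exact h
  have hprime2 : (Ideal.span ({l 2, l 1 - MvPolynomial.C t * l 4, l 0 - MvPolynomial.C t * l 3} : Set Rp)).IsPrime := by
    have h := span3_prime ![l 2, l 1 - MvPolynomial.C t * l 4, l 0 - MvPolynomial.C t * l 3, l 3, l 4]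
      (by
        intro i; fin_cases i
        · exact hl 2
        · exact (hl 1).sub ((hl 4).C_mul t)
        · exact (hl 0).sub ((hl 3).C_mul t)
        · exact hl 3
        · exact hl 4)
      (by
        rw [Fintype.linearIndependent_iff]
        intro c hc
        have hc' : c 0 • l 2 + c 1 • (l 1 - MvPolynomial.C t * l 4) +
            c 2 • (l 0 - MvPolynomial.C t * l 3) + c 3 • l 3 + c 4 • l 4 = 0 := by
          rw [Fin.sum_univ_five] at hc; exact hc
        have hd : ∀ j, (![c 2, c 1, c 0, c 3 - t * c 2, c 4 - t * c 1]) j = 0 := by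
          apply Fintype.linearIndependent_iff.mp hind
          rw [Fin.sum_univ_five]
          show c 2 • l 0 + c 1 • l 1 + c 0 • l 2 + (c 3 - t * c 2) • l 3 + (c 4 - t * c 1) • l 4 = 0
          simp only [smul_eq_C_mul, map_add, map_sub, _root_.map_mul] at hc' ⊢
          linear_combination hc'
        intro i; fin_cases i
        · exact hd 2
        · exact hd 1
        · exact hd 0
        · have h3 : c 3 - t * c 2 = 0 := hd 3
          have h2 : c 2 = 0 := hd 0
          rw [h2, mul_zero, sub_zero] at h3; exact h3
        · have h4 : c 4 - t * c 1 = 0 := hd 4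
          have h1 : c 1 = 0 := hd 1
          rw [h1, mul_zero, sub_zero] at h4; exact h4)
    exact h
  -- the sub-Pfaffian ideal is contained in both linear ideals
  have hsub : pfIdeal4 Mt ≤
      Ideal.span ({l 2, l 1 + MvPolynomial.C t * l 4, l 0 + MvPolynomial.C t * l 3} : Set Rp) ⊓
      Ideal.span ({l 2, l 1 - MvPolynomial.C t * l 4, l 0 - MvPolynomial.C t * l 3} : Set Rp) := by
    rw [pfIdeal4, Ideal.span_le]
    rintro x ⟨α, β, hlt, rfl⟩
    fin_cases α <;> fin_cases β
    · exact absurd hlt (by decide)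
    · exact Submodule.mem_inf.mpr
        ⟨mem_span3 (l 4) (0) (0) (hq01.trans (by ring)),
         mem_span3 (l 4) (0) (0) (hq01.trans (by ring))⟩
    · exact Submodule.mem_inf.mpr
        ⟨mem_span3 (l 3) (0) (0) (hq02.trans (by ring)),
         mem_span3 (l 3) (0) (0) (hq02.trans (by ring))⟩
    · exact Submodule.mem_inf.mpr
        ⟨mem_span3 (-l 2) (0) (0) (hq03.trans (by ring)),
         mem_span3 (-l 2) (0) (0) (hq03.trans (by ring))⟩
    · exact Submodule.mem_inf.mpr
        ⟨mem_span3 (-l 1) (0) (0) (hq04.trans (by ring)),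
         mem_span3 (-l 1) (0) (0) (hq04.trans (by ring))⟩
    · exact Submodule.mem_inf.mpr
        ⟨mem_span3 (-l 0) (0) (0) (hq05.trans (by ring)),
         mem_span3 (-l 0) (0) (0) (hq05.trans (by ring))⟩
    · exact absurd hlt (by decide)
    · exact absurd hlt (by decide)
    · exact Submodule.mem_inf.mpr
        ⟨mem_span3 (0) (l 3) (-l 4) (hq12.trans (by ring)),
         mem_span3 (0) (l 3) (-l 4) (hq12.trans (by ring))⟩
    · exact Submodule.mem_inf.mpr
        ⟨mem_span3 (-l 1) (0) (0) (hq13.trans (by ring)),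
         mem_span3 (-l 1) (0) (0) (hq13.trans (by ring))⟩
    · exact Submodule.mem_inf.mpr
        ⟨mem_span3 (0) (MvPolynomial.C t * l 4 - l 1) (0) (hq14.trans (by ring)),
         mem_span3 (0) (-(MvPolynomial.C t * l 4) - l 1) (0) (hq14.trans (by ring))⟩
    · exact Submodule.mem_inf.mpr
        ⟨mem_span3 (0) (-l 0) (MvPolynomial.C t * l 4) (hq15.trans (by ring)),
         mem_span3 (0) (-l 0) (-(MvPolynomial.C t * l 4)) (hq15.trans (by ring))⟩
    · exact absurd hlt (by decide)
    · exact absurd hlt (by decide)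
    · exact absurd hlt (by decide)
    · exact Submodule.mem_inf.mpr
        ⟨mem_span3 (-l 0) (0) (0) (hq23.trans (by ring)),
         mem_span3 (-l 0) (0) (0) (hq23.trans (by ring))⟩
    · exact Submodule.mem_inf.mpr
        ⟨mem_span3 (0) (-l 0) (MvPolynomial.C t * l 4) (hq24.trans (by ring)),
         mem_span3 (0) (-l 0) (-(MvPolynomial.C t * l 4)) (hq24.trans (by ring))⟩
    · exact Submodule.mem_inf.mpr
        ⟨mem_span3 (0) (0) (MvPolynomial.C t * l 3 - l 0) (hq25.trans (by ring)),
         mem_span3 (0) (0) (-(MvPolynomial.C t * l 3) - l 0) (hq25.trans (by ring))⟩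
    · exact absurd hlt (by decide)
    · exact absurd hlt (by decide)
    · exact absurd hlt (by decide)
    · exact absurd hlt (by decide)
    · exact Submodule.mem_inf.mpr
        ⟨mem_span3 (-(MvPolynomial.C t * MvPolynomial.C t * l 4)) (0) (0) (hq34.trans (by ring)),
         mem_span3 (-(MvPolynomial.C t * MvPolynomial.C t * l 4)) (0) (0) (hq34.trans (by ring))⟩
    · exact Submodule.mem_inf.mpr
        ⟨mem_span3 (-(MvPolynomial.C t * MvPolynomial.C t * l 3)) (0) (0) (hq35.trans (by ring)),
         mem_span3 (-(MvPolynomial.C t * MvPolynomial.C t * l 3)) (0) (0) (hq35.trans (by ring))⟩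
    · exact absurd hlt (by decide)
    · exact absurd hlt (by decide)
    · exact absurd hlt (by decide)
    · exact absurd hlt (by decide)
    · exact absurd hlt (by decide)
    · exact Submodule.mem_inf.mpr
        ⟨mem_span3 (0) (-(MvPolynomial.C t * MvPolynomial.C t * l 3)) (MvPolynomial.C t * MvPolynomial.C t * l 4) (hq45.trans (by ring)),
         mem_span3 (0) (-(MvPolynomial.C t * MvPolynomial.C t * l 3)) (MvPolynomial.C t * MvPolynomial.C t * l 4) (hq45.trans (by ring))⟩
    · exact absurd hlt (by decide)
    · exact absurd hlt (by decide)
    · exact absurd hlt (by decide)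
    · exact absurd hlt (by decide)
    · exact absurd hlt (by decide)
    · exact absurd hlt (by decide)
  -- the product of the two linear ideals is contained in the sub-Pfaffian ideal
  have hJ : ∀ (α β : Fin 6), α < β → subPf Mt α β ∈ pfIdeal4 Mt :=
    fun α β h' => Ideal.subset_span ⟨α, β, h', rfl⟩
  have m01 : l 2 * l 4 ∈ pfIdeal4 Mt := by have h := hJ 0 1 (by decide); rwa [hq01] at h
  have m02 : l 2 * l 3 ∈ pfIdeal4 Mt := by have h := hJ 0 2 (by decide); rwa [hq02] at h
  have m03 : -(l 2 * l 2) ∈ pfIdeal4 Mt := by have h := hJ 0 3 (by decide); rwa [hq03] at h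
  have m04 : -(l 1 * l 2) ∈ pfIdeal4 Mt := by have h := hJ 0 4 (by decide); rwa [hq04] at h
  have m05 : -(l 0 * l 2) ∈ pfIdeal4 Mt := by have h := hJ 0 5 (by decide); rwa [hq05] at h
  have m12 : l 1 * l 3 - l 0 * l 4 ∈ pfIdeal4 Mt := by have h := hJ 1 2 (by decide); rwa [hq12] at h
  have m14 : MvPolynomial.C t * MvPolynomial.C t * (l 4 * l 4) - l 1 * l 1 ∈ pfIdeal4 Mt := by
    have h := hJ 1 4 (by decide); rwa [hq14] at h
  have m15 : MvPolynomial.C t * MvPolynomial.C t * (l 3 * l 4) - l 0 * l 1 ∈ pfIdeal4 Mt := by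
    have h := hJ 1 5 (by decide); rwa [hq15] at h
  have m25 : MvPolynomial.C t * MvPolynomial.C t * (l 3 * l 3) - l 0 * l 0 ∈ pfIdeal4 Mt := by
    have h := hJ 2 5 (by decide); rwa [hq25] at h
  have hPP : Ideal.span ({l 2, l 1 + MvPolynomial.C t * l 4, l 0 + MvPolynomial.C t * l 3} : Set Rp) *
      Ideal.span ({l 2, l 1 - MvPolynomial.C t * l 4, l 0 - MvPolynomial.C t * l 3} : Set Rp) ≤
      pfIdeal4 Mt := by
    rw [Ideal.span_mul_span', Ideal.span_le]
    rintro x hx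
    rw [Set.mem_mul] at hx
    obtain ⟨g, hg, h, hh, rfl⟩ := hx
    simp only [Set.mem_insert_iff, Set.mem_singleton_iff] at hg hh
    rcases hg with rfl | rfl | rfl <;> rcases hh with rfl | rfl | rfl
    · exact comb2 (-1 : Rp) 0 m03 m03 (by ring)
    · exact comb2 (-1 : Rp) (-(MvPolynomial.C t)) m04 m01 (by ring)
    · exact comb2 (-1 : Rp) (-(MvPolynomial.C t)) m05 m02 (by ring)
    · exact comb2 (-1 : Rp) (MvPolynomial.C t) m04 m01 (by ring)
    · exact comb2 (-1 : Rp) 0 m14 m14 (by ring)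
    · exact comb2 (-1 : Rp) (-(MvPolynomial.C t)) m15 m12 (by ring)
    · exact comb2 (-1 : Rp) (MvPolynomial.C t) m05 m02 (by ring)
    · exact comb2 (-1 : Rp) (MvPolynomial.C t) m15 m12 (by ring)
    · exact comb2 (-1 : Rp) 0 m25 m25 (by ring)
  apply le_antisymm
  · exact le_inf
      (hprime1.radical_le_iff.mpr (fun x hx => (Submodule.mem_inf.mp (hsub hx)).1))
      (hprime2.radical_le_iff.mpr (fun x hx => (Submodule.mem_inf.mp (hsub hx)).2))
  · intro x hx
    rw [Submodule.mem_inf] at hx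
    exact Ideal.mem_radical_iff.mpr ⟨2, by
      rw [pow_two]
      exact hPP (Ideal.mul_mem_mul hx.1 hx.2)⟩
end
end

section
/- Let l₀,…,l₄ be ℂ-linearly independent linear forms in R and let t ∈ ℂ. Let M_t be the 6×6 skew-symmetric matrix over R with rows (0, t²·l₃, 0, 0, l₀, l₁), (−t²·l₃, 0, 0, −l₀, 0, l₂), (0, 0, 0, −l₁, −l₂, 0), (0, l₀, l₁, 0, l₃, 0), (−l₀, 0, l₂, −l₃, 0, 0), (−l₁, −l₂, 0, 0, 0, 0). Then Pf(M_t) = 0, and the radical of the sub-Pfaffian ideal I₄(M_t) equals the radical of the ideal of R generated by l₁, l₂ and l₀² − t²·l₃². -/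
open MvPolynomial Matrix

noncomputable section

theorem family_aux {A : Type*} [CommRing A] (s a b c d : A)
    (N : Matrix (Fin 6) (Fin 6) A)
    (hN : N = !![0, s * d, 0, 0, a, b;
                 -(s * d), 0, 0, -a, 0, c;
                 0, 0, 0, -b, -c, 0;
                 0, a, b, 0, d, 0;
                 -a, 0, c, -d, 0, 0;
                 -b, -c, 0, 0, 0, 0]) :
    pf N = 0 ∧
    (pfIdeal4 N).radical = (Ideal.span {b, c, a ^ 2 - s * d ^ 2}).radical := by
  subst hN
  set N : Matrix (Fin 6) (Fin 6) A :=
    !![0, s * d, 0, 0, a, b;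
       -(s * d), 0, 0, -a, 0, c;
       0, 0, 0, -b, -c, 0;
       0, a, b, 0, d, 0;
       -a, 0, c, -d, 0, 0;
       -b, -c, 0, 0, 0, 0] with hN
  set J : Ideal A := Ideal.span {b, c, a ^ 2 - s * d ^ 2} with hJ
  have hb : b ∈ J := Ideal.subset_span (by simp)
  have hc : c ∈ J := Ideal.subset_span (by simp)
  have he : a ^ 2 - s * d ^ 2 ∈ J := Ideal.subset_span (by simp)
  -- membership proofs for each literal sub-Pfaffian expression
  have n01 : (-b) * 0 - (-c) * 0 + 0 * d ∈ J := by
    rw [show (-b) * 0 - (-c) * 0 + 0 * d = (0 : A) by ring]; exact J.zero_mem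
  have n02 : (-a) * 0 - 0 * 0 + c * d ∈ J := by
    rw [show (-a) * 0 - 0 * 0 + c * d = c * d by ring]; exact Ideal.mul_mem_right d J hc
  have n03 : (0 : A) * 0 - 0 * 0 + c * (-c) ∈ J := by
    rw [show (0 : A) * 0 - 0 * 0 + c * (-c) = (-c) * c by ring]
    exact Ideal.mul_mem_left J (-c) hc
  have n04 : (0 : A) * 0 - (-a) * 0 + c * (-b) ∈ J := by
    rw [show (0 : A) * 0 - (-a) * 0 + c * (-b) = (-b) * c by ring]
    exact Ideal.mul_mem_left J (-b) hc
  have n05 : (0 : A) * d - (-a) * (-c) + 0 * (-b) ∈ J := by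
    rw [show (0 : A) * d - (-a) * (-c) + 0 * (-b) = (-a) * c by ring]
    exact Ideal.mul_mem_left J (-a) hc
  have n12 : (0 : A) * 0 - a * 0 + b * d ∈ J := by
    rw [show (0 : A) * 0 - a * 0 + b * d = b * d by ring]; exact Ideal.mul_mem_right d J hb
  have n13 : (0 : A) * 0 - a * 0 + b * (-c) ∈ J := by
    rw [show (0 : A) * 0 - a * 0 + b * (-c) = (-c) * b by ring]
    exact Ideal.mul_mem_left J (-c) hb
  have n14 : (0 : A) * 0 - 0 * 0 + b * (-b) ∈ J := by
    rw [show (0 : A) * 0 - 0 * 0 + b * (-b) = (-b) * b by ring]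
    exact Ideal.mul_mem_left J (-b) hb
  have n15 : (0 : A) * d - 0 * (-c) + a * (-b) ∈ J := by
    rw [show (0 : A) * d - 0 * (-c) + a * (-b) = (-a) * b by ring]
    exact Ideal.mul_mem_left J (-a) hb
  have n23 : s * d * 0 - a * c + b * 0 ∈ J := by
    rw [show s * d * 0 - a * c + b * 0 = (-a) * c by ring]
    exact Ideal.mul_mem_left J (-a) hc
  have n24 : s * d * 0 - 0 * c + b * (-a) ∈ J := by
    rw [show s * d * 0 - 0 * c + b * (-a) = (-a) * b by ring]
    exact Ideal.mul_mem_left J (-a) hb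
  have n25 : s * d * d - 0 * 0 + a * (-a) ∈ J := by
    rw [show s * d * d - 0 * 0 + a * (-a) = (-1) * (a ^ 2 - s * d ^ 2) by ring]
    exact Ideal.mul_mem_left J (-1) he
  have n34 : s * d * 0 - 0 * c + b * 0 ∈ J := by
    rw [show s * d * 0 - 0 * c + b * 0 = (0 : A) by ring]; exact J.zero_mem
  have n35 : s * d * (-c) - 0 * 0 + a * 0 ∈ J := by
    rw [show s * d * (-c) - 0 * 0 + a * 0 = (-(s * d)) * c by ring]
    exact Ideal.mul_mem_left J (-(s * d)) hc
  have n45 : s * d * (-b) - 0 * (-a) + 0 * 0 ∈ J := by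
    rw [show s * d * (-b) - 0 * (-a) + 0 * 0 = (-(s * d)) * b by ring]
    exact Ideal.mul_mem_left J (-(s * d)) hb
  have hq : ∀ α β : Fin 6, subPf N α β ∈ J := by
    intro α β
    fin_cases α <;> fin_cases β <;>
      first
        | exact J.zero_mem
        | exact n01 | exact n02 | exact n03 | exact n04 | exact n05
        | exact n12 | exact n13 | exact n14 | exact n15
        | exact n23 | exact n24 | exact n25
        | exact n34 | exact n35 | exact n45
  constructor
  · show s * d * ((-b) * 0 - (-c) * 0 + 0 * d)
        - 0 * ((-a) * 0 - 0 * 0 + c * d)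
        + 0 * ((0 : A) * 0 - 0 * 0 + c * (-c))
        - a * ((0 : A) * 0 - (-a) * 0 + c * (-b))
        + b * ((0 : A) * d - (-a) * (-c) + 0 * (-b)) = 0
    ring
  · have hle : pfIdeal4 N ≤ J := by
      rw [pfIdeal4, Ideal.span_le]
      rintro x ⟨α, β, -, rfl⟩
      exact hq α β
    refine le_antisymm (Ideal.radical_mono hle) ?_
    have hle2 : J ≤ (pfIdeal4 N).radical := by
      rw [hJ, Ideal.span_le]
      have q14 : subPf N 1 4 ∈ pfIdeal4 N :=
        Ideal.subset_span ⟨1, 4, by decide, rfl⟩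
      have q03 : subPf N 0 3 ∈ pfIdeal4 N :=
        Ideal.subset_span ⟨0, 3, by decide, rfl⟩
      have q25 : subPf N 2 5 ∈ pfIdeal4 N :=
        Ideal.subset_span ⟨2, 5, by decide, rfl⟩
      have hb2 : b ^ 2 ∈ pfIdeal4 N := by
        have h14 : subPf N 1 4 = -(b ^ 2) := by
          show (0 : A) * 0 - 0 * 0 + b * (-b) = -(b ^ 2); ring
        have := (pfIdeal4 N).neg_mem q14
        rwa [h14, neg_neg] at this
      have hc2 : c ^ 2 ∈ pfIdeal4 N := by
        have h03 : subPf N 0 3 = -(c ^ 2) := by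
          show (0 : A) * 0 - 0 * 0 + c * (-c) = -(c ^ 2); ring
        have := (pfIdeal4 N).neg_mem q03
        rwa [h03, neg_neg] at this
      have he1 : a ^ 2 - s * d ^ 2 ∈ pfIdeal4 N := by
        have h25 : subPf N 2 5 = -(a ^ 2 - s * d ^ 2) := by
          show s * d * d - 0 * 0 + a * (-a) = -(a ^ 2 - s * d ^ 2); ring
        have := (pfIdeal4 N).neg_mem q25
        rwa [h25, neg_neg] at this
      rintro x hx
      simp only [Set.mem_insert_iff, Set.mem_singleton_iff] at hx
      rcases hx with rfl | rfl | rfl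
      · exact Ideal.mem_radical_iff.mpr ⟨2, hb2⟩
      · exact Ideal.mem_radical_iff.mpr ⟨2, hc2⟩
      · exact Ideal.le_radical he1
    have := Ideal.radical_mono hle2
    rwa [Ideal.radical_idem] at this

/-- The family exhibiting the specialization of type (c) matrices to a type (e) matrix. -/
theorem family_c_to_e
    (l : Fin 5 → Rp) (hl : ∀ i, (l i).IsHomogeneous 1) (hind : LinearIndependent ℂ l)
    (t : ℂ) (Mt : Matrix (Fin 6) (Fin 6) Rp)
    (hMt : Mt = !![0, MvPolynomial.C (t ^ 2) * l 3, 0, 0, l 0, l 1;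
                 -(MvPolynomial.C (t ^ 2) * l 3), 0, 0, -l 0, 0, l 2;
                 0, 0, 0, -l 1, -l 2, 0;
                 0, l 0, l 1, 0, l 3, 0;
                 -l 0, 0, l 2, -l 3, 0, 0;
                 -l 1, -l 2, 0, 0, 0, 0]) :
    pf Mt = 0 ∧
    (pfIdeal4 Mt).radical = (Ideal.span {l 1, l 2, l 0 ^ 2 - MvPolynomial.C (t ^ 2) * l 3 ^ 2}).radical :=
  family_aux (MvPolynomial.C (t ^ 2)) (l 0) (l 1) (l 2) (l 3) Mt hMt
end
end
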